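/- arXiv:2301.04462 — 5 statements merged into one kernel-verified Lean document; each statement's English description precedes it below -/
import Mathlib

section
/- The distributional Bellman operator T^π : P(ℝ)^X → P(ℝ)^X is a γ-contraction with respect to w̄_∞: for all η, η' ∈ P(ℝ)^X, w̄_∞(T^π η, T^π η') ≤ γ · w̄_∞(η, η') (as an inequality in [0,∞]). -/
open MeasureTheory ProbabilityTheory Set
open scoped ENNReal

/-- Generalized inverse CDF (least τ-quantile). -/
noncomputable def invCDF (ν : Measure ℝ) (τ : ℝ) : ℝ := sInf {y | τ ≤ cdf ν y}

/-- Upper inverse CDF (greatest τ-quantile). -/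
noncomputable def upInvCDF (ν : Measure ℝ) (τ : ℝ) : ℝ := sInf {y | τ < cdf ν y}

/-- Quantile level τ_i = (2i-1)/(2m), with `i : Fin m` zero-indexed. -/
noncomputable def qlevel (m : ℕ) (i : Fin m) : ℝ := (2 * (i : ℝ) + 1) / (2 * m)

/-- The uniform m-atom distribution with the given particle locations. -/
noncomputable def paramDistOne {m : ℕ} (θ : Fin m → ℝ) : Measure ℝ :=
  (m : ℝ≥0∞)⁻¹ • ∑ i : Fin m, Measure.dirac (θ i)

/-- Return-distribution function associated with quantile parameters θ. -/
noncomputable def paramDist {X : Type*} {m : ℕ} (θ : X → Fin m → ℝ) : X → Measure ℝ :=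
  fun x => paramDistOne (θ x)

/-- The distributional Bellman operator T^π. -/
noncomputable def bellman {X : Type*} [MeasurableSpace X]
    (P : X → Measure (ℝ × X)) (γ : ℝ) (η : X → Measure ℝ) : X → Measure ℝ :=
  fun x => (P x).bind (fun p => (η p.2).map (fun z => p.1 + γ * z))

/-- The quantile projection Π^λ, parameter-level output. -/
noncomputable def projParam {X : Type*} {m : ℕ} (lam : X → Fin m → ℝ)
    (η : X → Measure ℝ) : X → Fin m → ℝ :=
  fun x i => (1 - lam x i) * invCDF (η x) (qlevel m i) + lam x i * upInvCDF (η x) (qlevel m i)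

/-- The quantile projection Π^λ on return-distribution functions. -/
noncomputable def proj {X : Type*} {m : ℕ} (lam : X → Fin m → ℝ)
    (η : X → Measure ℝ) : X → Measure ℝ :=
  paramDist (projParam lam η)

/-- The projected distributional Bellman operator Π^λ T^π acting on parameters. -/
noncomputable def projBellmanParam {X : Type*} [MeasurableSpace X]
    (P : X → Measure (ℝ × X)) (γ : ℝ) {m : ℕ} (lam : X → Fin m → ℝ)
    (θ : X → Fin m → ℝ) : X → Fin m → ℝ :=
  projParam lam (bellman P γ (paramDist θ))

/-- The cube [0,1]^{X×[m]} of interpolation parameters. -/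
def unitCube (X : Type*) (m : ℕ) : Set (X → Fin m → ℝ) :=
  {lam | ∀ x i, lam x i ∈ Set.Icc (0:ℝ) 1}

/-- Wasserstein-∞ distance (valued in [0,∞]). -/
noncomputable def winf (ν ν' : Measure ℝ) : ℝ≥0∞ :=
  ⨆ t : Set.Ioo (0:ℝ) 1, ENNReal.ofReal |invCDF ν t - invCDF ν' t|

/-- Extension of w∞ to return-distribution functions: max over states. -/
noncomputable def wbar {X : Type*} (η η' : X → Measure ℝ) : ℝ≥0∞ :=
  ⨆ x : X, winf (η x) (η' x)

/-- Wasserstein-1 distance between probability distributions on ℝ. -/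
noncomputable def w1 (ν ν' : Measure ℝ) : ℝ :=
  ∫ t in Set.Ioo (0:ℝ) 1, |invCDF ν t - invCDF ν' t|

/-- Uniform m-atom distributions. -/
noncomputable def FQ (m : ℕ) : Set (Measure ℝ) :=
  {ν | ∃ z : Fin m → ℝ, ν = paramDistOne z}

/-! Two return distributions are within `w∞`-distance `c` iff each one's CDF dominates the other's
shifted by `c`. This shift dominance is a family of inequalities between the masses of half-lines
`(-∞, y]`, and such inequalities are linear in the measure: they pass through the affine map
`z ↦ r + γ z` (turning the shift `c` into `γ c`) and through averaging over `(R, X') ∼ P(· | x)`. -/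

section Quantile

open Filter Topology

variable (ν ν' : Measure ℝ) {τ : ℝ}

lemma bddBelow_setOf_le_cdf (h0 : 0 < τ) : BddBelow {y | τ ≤ cdf ν y} := by
  obtain ⟨y₀, hy₀⟩ :=
    eventually_atBot.mp ((tendsto_cdf_atBot ν).eventually (eventually_lt_nhds h0))
  exact ⟨y₀, fun y hy => not_lt.mp fun hlt => (hy₀ y hlt.le).not_ge hy⟩

lemma le_cdf_invCDF (h0 : 0 < τ) (h1 : τ < 1) : τ ≤ cdf ν (invCDF ν τ) := by
  have hne : {y | τ ≤ cdf ν y}.Nonempty :=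
    ((tendsto_cdf_atTop ν).eventually (eventually_ge_nhds h1)).exists
  have hright : ∀ z > invCDF ν τ, τ ≤ cdf ν z := fun z hz => by
    obtain ⟨s, hs, hsz⟩ := (csInf_lt_iff (bddBelow_setOf_le_cdf ν h0) hne).mp hz
    exact hs.trans (monotone_cdf ν hsz.le)
  have hlim := ((cdf ν).right_continuous (invCDF ν τ)).mono_left
    (nhdsWithin_mono _ Ioi_subset_Ici_self)
  exact ge_of_tendsto hlim (eventually_nhdsWithin_of_forall hright)

lemma invCDF_le_iff (h0 : 0 < τ) (h1 : τ < 1) (y : ℝ) : invCDF ν τ ≤ y ↔ τ ≤ cdf ν y :=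
  ⟨fun h => (le_cdf_invCDF ν h0 h1).trans (monotone_cdf ν h),
    fun h => csInf_le (bddBelow_setOf_le_cdf ν h0) h⟩

lemma invCDF_le_invCDF_add_iff {c : ℝ} :
    (∀ τ ∈ Ioo (0 : ℝ) 1, invCDF ν τ ≤ invCDF ν' τ + c) ↔ ∀ y, cdf ν' y ≤ cdf ν (y + c) := by
  constructor
  · intro h y
    by_contra! hlt
    obtain ⟨t, hνt, htν'⟩ := exists_between hlt
    have ht0 : 0 < t := (cdf_nonneg ν _).trans_lt hνt
    have ht1 : t < 1 := htν'.trans_le (cdf_le_one ν' y)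
    have hν' : invCDF ν' t ≤ y := (invCDF_le_iff ν' ht0 ht1 y).mpr htν'.le
    have hν : invCDF ν t ≤ y + c := by linarith [h t ⟨ht0, ht1⟩]
    exact hνt.not_ge ((invCDF_le_iff ν ht0 ht1 (y + c)).mp hν)
  · rintro h τ ⟨h0, h1⟩
    rw [invCDF_le_iff ν h0 h1]
    exact (le_cdf_invCDF ν' h0 h1).trans (h _)

lemma winf_le_ofReal_iff {c : ℝ} (hc : 0 ≤ c) :
    winf ν ν' ≤ ENNReal.ofReal c ↔
      (∀ y, cdf ν' y ≤ cdf ν (y + c)) ∧ ∀ y, cdf ν y ≤ cdf ν' (y + c) := by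
  rw [← invCDF_le_invCDF_add_iff, ← invCDF_le_invCDF_add_iff, winf, iSup_le_iff]
  simp only [ENNReal.ofReal_le_ofReal_iff hc, abs_sub_le_iff, Subtype.forall, tsub_le_iff_right]
  grind

end Quantile

lemma cdf_le_cdf_iff (ν ν' : Measure ℝ) [IsProbabilityMeasure ν] [IsProbabilityMeasure ν']
    (y z : ℝ) : cdf ν y ≤ cdf ν' z ↔ ν (Iic y) ≤ ν' (Iic z) := by
  rw [← ofReal_cdf, ← ofReal_cdf, ENNReal.ofReal_le_ofReal_iff (cdf_nonneg _ _)]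

lemma winf_self (ν : Measure ℝ) : winf ν ν = 0 := by
  simp [winf]

lemma wbar_self {X : Type*} (η : X → Measure ℝ) : wbar η η = 0 := by
  simp [wbar, winf_self]

lemma map_affine_Iic_le {ν ν' : Measure ℝ} {γ c : ℝ} (hγ : 0 < γ)
    (h : ∀ y, ν (Iic y) ≤ ν' (Iic (y + c))) (r y : ℝ) :
    ν.map (fun z => r + γ * z) (Iic y) ≤ ν'.map (fun z => r + γ * z) (Iic (y + γ * c)) := by
  have hmeas : Measurable fun z : ℝ => r + γ * z := by fun_prop
  have hpre : ∀ y, (fun z : ℝ => r + γ * z) ⁻¹' Iic y = Iic ((y - r) / γ) := fun y => by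
    ext z
    simp only [mem_preimage, mem_Iic, le_div_iff₀ hγ]
    constructor <;> intro <;> linarith
  rw [Measure.map_apply hmeas measurableSet_Iic, Measure.map_apply hmeas measurableSet_Iic,
    hpre, hpre, show (y + γ * c - r) / γ = (y - r) / γ + c by field_simp; ring]
  exact h _

lemma bellman_zero_discount {X : Type*} [MeasurableSpace X] (P : X → Measure (ℝ × X))
    (η : X → Measure ℝ) [∀ x, IsProbabilityMeasure (η x)] :
    bellman P 0 η = fun x => (P x).bind fun p => Measure.dirac p.1 := by
  funext x
  simp only [bellman, zero_mul, add_zero, Measure.map_const, measure_univ, one_smul]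

section Bellman

variable {X : Type*} [MeasurableSpace X] [Countable X] [MeasurableSingletonClass X]
  (P : X → Measure (ℝ × X)) (γ : ℝ) (η η' : X → Measure ℝ)

lemma measurable_map_affine [∀ x, SFinite (η x)] :
    Measurable fun p : ℝ × X => (η p.2).map (fun z => p.1 + γ * z) := by
  refine Measure.measurable_of_measurable_coe _ fun s hs => ?_
  have hT : MeasurableSet {q : ℝ × ℝ | q.1 + γ * q.2 ∈ s} :=
    (measurable_fst.add (measurable_const.mul measurable_snd)) hs
  have hmap : ∀ p : ℝ × X, (η p.2).map (fun z => p.1 + γ * z) s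
      = η p.2 (Prod.mk p.1 ⁻¹' {q : ℝ × ℝ | q.1 + γ * q.2 ∈ s}) := fun p => by
    rw [Measure.map_apply (by fun_prop) hs]
    rfl
  simp_rw [hmap]
  exact measurable_from_prod_countable_left fun x => measurable_measure_prodMk_left (ν := η x) hT

lemma bellman_apply [∀ x, SFinite (η x)] (x : X) {s : Set ℝ} (hs : MeasurableSet s) :
    bellman P γ η x s = ∫⁻ p, (η p.2).map (fun z => p.1 + γ * z) s ∂P x :=
  Measure.bind_apply hs (measurable_map_affine γ η).aemeasurable

instance isProbabilityMeasure_bellman [∀ x, IsProbabilityMeasure (P x)]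
    [∀ x, IsProbabilityMeasure (η x)] (x : X) : IsProbabilityMeasure (bellman P γ η x) :=
  isProbabilityMeasure_bind (measurable_map_affine γ η).aemeasurable <|
    ae_of_all _ fun _ => Measure.isProbabilityMeasure_map (by fun_prop)

variable [∀ x, IsProbabilityMeasure (P x)] [∀ x, IsProbabilityMeasure (η x)]
  [∀ x, IsProbabilityMeasure (η' x)]

lemma bellman_cdf_le {γ c : ℝ} (hγ : 0 < γ) (h : ∀ x y, cdf (η x) y ≤ cdf (η' x) (y + c))
    (x : X) (y : ℝ) : cdf (bellman P γ η x) y ≤ cdf (bellman P γ η' x) (y + γ * c) := by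
  rw [cdf_le_cdf_iff, bellman_apply P γ η x measurableSet_Iic,
    bellman_apply P γ η' x measurableSet_Iic]
  exact lintegral_mono fun p =>
    map_affine_Iic_le hγ (fun y => (cdf_le_cdf_iff _ _ _ _).mp (h p.2 y)) p.1 y

lemma wbar_bellman_le {γ c : ℝ} (hγ : 0 < γ) (hc : 0 ≤ c) (h : wbar η η' ≤ ENNReal.ofReal c) :
    wbar (bellman P γ η) (bellman P γ η') ≤ ENNReal.ofReal (γ * c) := by
  simp only [wbar, iSup_le_iff, winf_le_ofReal_iff _ _ hc] at h
  refine iSup_le fun x => (winf_le_ofReal_iff _ _ (mul_nonneg hγ.le hc)).mpr ⟨?_, ?_⟩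
  · exact bellman_cdf_le P η' η hγ (fun x => (h x).1) x
  · exact bellman_cdf_le P η η' hγ (fun x => (h x).2) x

end Bellman

theorem bellman_gamma_contraction_general
    {X : Type*} [Fintype X] [MeasurableSpace X] [MeasurableSingletonClass X]
    (P : X → Measure (ℝ × X)) (hP : ∀ x, IsProbabilityMeasure (P x))
    (γ : ℝ) (hγ0 : 0 ≤ γ)
    (η η' : X → Measure ℝ)
    (hη : ∀ x, IsProbabilityMeasure (η x)) (hη' : ∀ x, IsProbabilityMeasure (η' x)) :
    wbar (bellman P γ η) (bellman P γ η') ≤ ENNReal.ofReal γ * wbar η η' := by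
  -- `ofReal 0 * ∞ = 0`, so for `γ = 0` the two images must coincide outright.
  rcases hγ0.eq_or_lt with rfl | hγ
  · rw [bellman_zero_discount P η, bellman_zero_discount P η', wbar_self]
    exact bot_le
  obtain hinf | hfin := eq_or_ne (wbar η η') ∞
  · rw [hinf, ENNReal.mul_top (ENNReal.ofReal_pos.mpr hγ).ne']
    exact le_top
  calc wbar (bellman P γ η) (bellman P γ η')
      ≤ ENNReal.ofReal (γ * (wbar η η').toReal) :=
        wbar_bellman_le P η η' hγ ENNReal.toReal_nonneg (ENNReal.ofReal_toReal hfin).ge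
    _ = ENNReal.ofReal γ * wbar η η' := by
        rw [ENNReal.ofReal_mul hγ0, ENNReal.ofReal_toReal hfin]

/-- The distributional Bellman operator `T^π` is a `γ`-contraction
with respect to `w̄_∞` (as an inequality in `[0,∞]`). -/
theorem bellman_gamma_contraction
    {X : Type*} [Fintype X] [MeasurableSpace X] [MeasurableSingletonClass X]
    (P : X → Measure (ℝ × X)) (hP : ∀ x, IsProbabilityMeasure (P x))
    (hPmean : ∀ x, Integrable (fun p : ℝ × X => p.1) (P x))
    (γ : ℝ) (hγ0 : 0 ≤ γ) (hγ1 : γ < 1)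
    (η η' : X → Measure ℝ)
    (hη : ∀ x, IsProbabilityMeasure (η x)) (hη' : ∀ x, IsProbabilityMeasure (η' x)) :
    wbar (bellman P γ η) (bellman P γ η') ≤ ENNReal.ofReal γ * wbar η η' :=
  bellman_gamma_contraction_general P hP γ hγ0 η η' hη hη'
end

section
/- Lyapunov function for the QTD differential inclusion: the function L(θ) = min_{λ ∈ [0,1]^{X×[m]}} max_{(x,i)} |θ(x,i) − θ̂^π_λ(x,i)| is a Lyapunov function for the differential inclusion ∂_t ϑ_t(x,i) ∈ [τ_i − F_{(T^π ϑ_t)(x)}(ϑ_t(x,i)), τ_i − F_{(T^π ϑ_t)(x)}(ϑ_t(x,i)−)] and the set of QDP fixed points Λ = {θ̂^π_λ : λ ∈ [0,1]^{X×[m]}}: L is continuous, nonnegative, vanishes exactly on Λ, and along any solution (ϑ_t)_{t≥0} of the differential inclusion, L(ϑ_t) < L(ϑ_s) whenever 0 ≤ s < t and ϑ_s ∉ Λ. -/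
open MeasureTheory ProbabilityTheory Set
open scoped ENNReal

/-!
The QDP fixed points are exactly the parameters `θ` each of whose atoms `θ(x,i)` is a
`τ_i`-quantile of `(T^π η_θ)(x)`. This set `Λ` is closed and `L` is the distance to `Λ`, which gives
continuity, nonnegativity and the zero set of `L`.

Lowering all atoms by at most `c` lowers `T^π η_θ` by at most `γ c`. Hence a coordinate of a
solution lying more than `γ ‖ϑ_t - θ̂‖_∞` away from a fixed point `θ̂` is pushed towards it, and
`t ↦ ‖ϑ_t - θ̂‖_∞` is nonincreasing for every `θ̂ ∈ Λ`. If the distance `D` to a nearest fixed point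
`θ̂` does not drop on `[s, t]`, the coordinates at distance `D` are frozen with zero velocity, which
forces the quantile intervals of `T^π η_θ̂` to reach `(1 - γ) D` beyond `θ̂` there. A Knaster–Tarski
argument in a small box around `θ̂`, pushed towards `ϑ_t` at those coordinates, then yields a fixed
point strictly closer to `ϑ_t`.
-/

open Filter Topology

namespace QTD

section Quantile

def IsQuantile (ν : Measure ℝ) (τ y : ℝ) : Prop :=
  τ ≤ cdf ν y ∧ ∀ z < y, cdf ν z ≤ τ

variable {ν ν' : Measure ℝ} {τ : ℝ}

lemma le_cdf_of_forall_lt_le_cdf {a : ℝ} (h : ∀ y, a < y → τ ≤ cdf ν y) : τ ≤ cdf ν a :=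
  ge_of_tendsto (((cdf ν).right_continuous a).mono Ioi_subset_Ici_self)
    (eventually_nhdsWithin_of_forall h)

lemma bddBelow_setOf_le_cdf (hτ : 0 < τ) : BddBelow {y | τ ≤ cdf ν y} := by
  obtain ⟨y₀, hy₀⟩ := ((tendsto_cdf_atBot ν).eventually_lt_const hτ).exists
  exact ⟨y₀, fun y hy => le_of_not_gt fun hyy₀ => (((cdf ν).mono hyy₀.le).trans_lt hy₀).not_ge hy⟩

lemma bddBelow_setOf_lt_cdf (hτ : 0 < τ) : BddBelow {y | τ < cdf ν y} :=
  (bddBelow_setOf_le_cdf hτ).mono fun _ (hy : τ < cdf ν _) => hy.le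

lemma nonempty_setOf_lt_cdf (hτ : τ < 1) : {y | τ < cdf ν y}.Nonempty :=
  ((tendsto_cdf_atTop ν).eventually_const_lt hτ).exists

lemma nonempty_setOf_le_cdf (hτ : τ < 1) : {y | τ ≤ cdf ν y}.Nonempty :=
  (nonempty_setOf_lt_cdf hτ).mono fun _ (hy : τ < cdf ν _) => hy.le

lemma invCDF_le (hτ : 0 < τ) {y : ℝ} (hy : τ ≤ cdf ν y) : invCDF ν τ ≤ y :=
  csInf_le (bddBelow_setOf_le_cdf hτ) hy

lemma le_cdf_invCDF (hτ : τ < 1) : τ ≤ cdf ν (invCDF ν τ) := by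
  refine le_cdf_of_forall_lt_le_cdf fun y hy => ?_
  obtain ⟨z, hz, hzy⟩ := exists_lt_of_csInf_lt (nonempty_setOf_le_cdf hτ) hy
  exact hz.trans ((cdf ν).mono hzy.le)

lemma cdf_le_of_lt_upInvCDF (hτ : 0 < τ) {y : ℝ} (hy : y < upInvCDF ν τ) : cdf ν y ≤ τ :=
  le_of_not_gt fun h => (csInf_le (bddBelow_setOf_lt_cdf hτ) h).not_gt hy

lemma le_upInvCDF (hτ : τ < 1) {w : ℝ} (hw : ∀ y < w, cdf ν y ≤ τ) : w ≤ upInvCDF ν τ :=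
  le_csInf (nonempty_setOf_lt_cdf hτ) fun y hy => le_of_not_gt fun hyw => (hw y hyw).not_gt hy

lemma invCDF_le_upInvCDF (hτ₀ : 0 < τ) (hτ₁ : τ < 1) : invCDF ν τ ≤ upInvCDF ν τ :=
  csInf_le_csInf (bddBelow_setOf_le_cdf hτ₀) (nonempty_setOf_lt_cdf hτ₁)
    fun _ (h : τ < cdf ν _) => h.le

lemma isQuantile_iff_mem_Icc (hτ₀ : 0 < τ) (hτ₁ : τ < 1) {y : ℝ} :
    IsQuantile ν τ y ↔ y ∈ Icc (invCDF ν τ) (upInvCDF ν τ) :=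
  ⟨fun h => ⟨invCDF_le hτ₀ h.1, le_upInvCDF hτ₁ h.2⟩, fun h =>
    ⟨(le_cdf_invCDF hτ₁).trans ((cdf ν).mono h.1),
      fun _ hz => cdf_le_of_lt_upInvCDF hτ₀ (hz.trans_le h.2)⟩⟩

lemma invCDF_le_invCDF (hτ₀ : 0 < τ) (hτ₁ : τ < 1) (h : ∀ z, cdf ν' z ≤ cdf ν z) :
    invCDF ν τ ≤ invCDF ν' τ :=
  csInf_le_csInf (bddBelow_setOf_le_cdf hτ₀) (nonempty_setOf_le_cdf hτ₁)
    fun z hz => le_trans hz (h z)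

lemma upInvCDF_le_upInvCDF (hτ₀ : 0 < τ) (hτ₁ : τ < 1) (h : ∀ z, cdf ν' z ≤ cdf ν z) :
    upInvCDF ν τ ≤ upInvCDF ν' τ :=
  csInf_le_csInf (bddBelow_setOf_lt_cdf hτ₀) (nonempty_setOf_lt_cdf hτ₁)
    fun z hz => lt_of_lt_of_le hz (h z)

end Quantile

lemma exists_convex_combination_eq_of_mem_Icc {a b y : ℝ} (h : y ∈ Icc a b) :
    ∃ l ∈ Icc (0 : ℝ) 1, (1 - l) * a + l * b = y := by
  rw [← segment_eq_Icc (h.1.trans h.2), segment_eq_image] at h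
  simpa [smul_eq_mul] using h

lemma exists_fixedPoint_mem_Icc {α : Type*} [ConditionallyCompleteLattice α] {l u : α}
    (hlu : l ≤ u) {f : α → α} (hf : Monotone f) (hmaps : MapsTo f (Icc l u) (Icc l u)) :
    ∃ a ∈ Icc l u, f a = a := by
  have : Fact (l ≤ u) := ⟨hlu⟩
  let F : Icc l u →o Icc l u := ⟨hmaps.restrict f _ _, fun _ _ hab => hf hab⟩
  exact ⟨F.lfp, F.lfp.2, congrArg Subtype.val F.map_lfp⟩

lemma exists_pos_forall_add_lt {ι : Type*} [Finite ι] (a : ι → ℝ) {b D : ℝ} (hb : 0 < b) :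
    ∃ ε, 0 < ε ∧ ε ≤ b ∧ ∀ k, a k < D → a k + ε < D := by
  have h : ∀ᶠ ε in 𝓝 (0 : ℝ), ε ≤ b ∧ ∀ k, a k < D → a k + ε < D := by
    refine (eventually_le_nhds hb).and (eventually_all.2 fun k => ?_)
    by_cases hk : a k < D
    · exact (eventually_lt_nhds (sub_pos.2 hk)).mono fun ε hε _ => by linarith
    · exact Eventually.of_forall fun _ h => absurd h hk
  obtain ⟨ε, hε, hεb, hεD⟩ := h.exists_gt
  exact ⟨ε, hε, hεb, hεD⟩

lemma exists_abs_eq_one_and_mul_eq_abs (a : ℝ) : ∃ σ : ℝ, |σ| = 1 ∧ σ * a = |a| := by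
  rcases abs_cases a with ⟨h, -⟩ | ⟨h, -⟩
  · exact ⟨1, abs_one, by rw [one_mul, h]⟩
  · exact ⟨-1, by simp, by rw [h]; ring⟩

lemma mul_le_abs_of_abs_eq_one {σ : ℝ} (hσ : |σ| = 1) (a : ℝ) : σ * a ≤ |a| :=
  (le_abs_self _).trans (by rw [abs_mul, hσ, one_mul])

lemma le_of_ae_nonpos_above {f φ : ℝ → ℝ} {a b M : ℝ} (hab : a ≤ b)
    (hf : ContinuousOn f (Icc a b)) (hfφ : ∀ v ∈ Icc a b, f b - f v = ∫ s in Ioc v b, φ s)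
    (ha : f a ≤ M) (hφ : ∀ᵐ s ∂volume.restrict (Ioc a b), M < f s → φ s ≤ 0) : f b ≤ M := by
  let A := Icc a b ∩ f ⁻¹' Iic M
  have hAbdd : BddAbove A := ⟨b, fun v hv => hv.1.2⟩
  have hv : sSup A ∈ A := (hf.preimage_isClosed_of_isClosed isClosed_Icc isClosed_Iic).csSup_mem
    ⟨a, ⟨le_rfl, hab⟩, ha⟩ hAbdd
  have habove : ∀ s ∈ Ioc (sSup A) b, M < f s := fun s hs =>
    lt_of_not_ge fun hfs => hs.1.not_ge (le_csSup hAbdd ⟨⟨hv.1.1.trans hs.1.le, hs.2⟩, hfs⟩)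
  have : ∫ s in Ioc (sSup A) b, φ s ≤ 0 := by
    refine setIntegral_nonpos_of_ae_restrict ?_
    filter_upwards [ae_restrict_of_ae_restrict_of_subset (Ioc_subset_Ioc_left hv.1.1) hφ,
      ae_restrict_mem measurableSet_Ioc] with s hs hsA using hs (habove s hsA)
  linarith [hfφ _ hv.1, show f (sSup A) ≤ M from hv.2]

section PiDist

variable {ι κ : Type*} [Fintype ι] [Fintype κ] {f g : ι → κ → ℝ}

lemma abs_sub_le_dist (f g : ι → κ → ℝ) (x : ι) (i : κ) : |f x i - g x i| ≤ dist f g :=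
  (Real.dist_eq _ _ ▸ dist_le_pi_dist (f x) (g x) i).trans (dist_le_pi_dist f g x)

lemma dist_lt_of_forall_abs_sub_lt {r : ℝ} (hr : 0 < r) (h : ∀ x i, |f x i - g x i| < r) :
    dist f g < r :=
  (dist_pi_lt_iff hr).2 fun x => (dist_pi_lt_iff hr).2 fun i => (Real.dist_eq _ _).trans_lt (h x i)

lemma exists_abs_sub_eq_dist (h : 0 < dist f g) : ∃ x i, |f x i - g x i| = dist f g := by
  obtain ⟨x, hx⟩ := ((dist_pi_eq_iff h).1 rfl).1
  obtain ⟨i, hi⟩ := ((dist_pi_eq_iff (hx ▸ h)).1 hx).1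
  exact ⟨x, i, (Real.dist_eq _ _).symm.trans hi⟩

lemma iSup_iSup_abs_sub_eq_dist (f g : ι → κ → ℝ) : ⨆ x, ⨆ i, |f x i - g x i| = dist f g := by
  refine le_antisymm (Real.iSup_le (fun x => Real.iSup_le (abs_sub_le_dist f g x) dist_nonneg)
    dist_nonneg) ?_
  have hnonneg : 0 ≤ ⨆ x, ⨆ i, |f x i - g x i| :=
    Real.iSup_nonneg fun _ => Real.iSup_nonneg fun _ => abs_nonneg _
  refine (dist_pi_le_iff hnonneg).2 fun x => (dist_pi_le_iff hnonneg).2 fun i => ?_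
  rw [Real.dist_eq]
  exact (le_ciSup (Finite.bddAbove_range fun i => |f x i - g x i|) i).trans
    (le_ciSup (Finite.bddAbove_range fun x => ⨆ i, |f x i - g x i|) x)

end PiDist

lemma qlevel_pos {m : ℕ} (i : Fin m) : 0 < qlevel m i := by
  have : 0 < m := i.pos
  unfold qlevel
  positivity

lemma qlevel_lt_one {m : ℕ} (i : Fin m) : qlevel m i < 1 := by
  have hi : (i : ℝ) + 1 ≤ m := by exact_mod_cast i.isLt
  rw [qlevel, div_lt_one (by linarith [(i : ℕ).cast_nonneg (α := ℝ)])]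
  linarith

section Bellman

variable {X : Type*} {m : ℕ}

lemma paramDistOne_apply (w : Fin m → ℝ) {s : Set ℝ} (hs : MeasurableSet s) :
    paramDistOne w s = (m : ℝ≥0∞)⁻¹ * ∑ j, s.indicator 1 (w j) := by
  simp [paramDistOne, Measure.finsetSum_apply, Measure.dirac_apply' _ hs]

lemma map_paramDistOne (w : Fin m → ℝ) {f : ℝ → ℝ} (hf : Measurable f) :
    (paramDistOne w).map f = paramDistOne (f ∘ w) := by
  simp [paramDistOne, Measure.map_smul, Measure.map_finset_sum' hf.aemeasurable,
    Measure.map_dirac' hf]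

variable [MeasurableSpace X]

lemma bellman_paramDist (P : X → Measure (ℝ × X)) (γ : ℝ) (θ : X → Fin m → ℝ) (x : X) :
    bellman P γ (paramDist θ) x =
      (P x).bind fun p => paramDistOne fun j => p.1 + γ * θ p.2 j := by
  simp only [bellman, paramDist]
  congr 1
  funext p
  exact map_paramDistOne _ (by fun_prop)

variable [Countable X] [MeasurableSingletonClass X]

lemma measurable_paramDistOne_shift (γ : ℝ) (θ : X → Fin m → ℝ) :
    Measurable fun p : ℝ × X => paramDistOne fun j => p.1 + γ * θ p.2 j := by
  refine Measure.measurable_of_measurable_coe _ fun s hs => ?_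
  simp_rw [paramDistOne_apply _ hs]
  refine Measurable.const_mul (Finset.measurable_sum _ fun j _ => ?_) _
  exact (measurable_one.indicator hs).comp
    (measurable_fst.add ((measurable_of_countable fun x : X => γ * θ x j).comp measurable_snd))

lemma bellman_paramDist_apply (P : X → Measure (ℝ × X)) (γ : ℝ) (θ : X → Fin m → ℝ) (x : X)
    {s : Set ℝ} (hs : MeasurableSet s) :
    bellman P γ (paramDist θ) x s =
      ∫⁻ p, (m : ℝ≥0∞)⁻¹ * ∑ j, s.indicator 1 (p.1 + γ * θ p.2 j) ∂P x := by
  rw [bellman_paramDist, Measure.bind_apply hs (measurable_paramDistOne_shift γ θ).aemeasurable]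
  exact lintegral_congr fun p => paramDistOne_apply _ hs

lemma isProbabilityMeasure_bellman_paramDist {P : X → Measure (ℝ × X)}
    (hP : ∀ x, IsProbabilityMeasure (P x)) (γ : ℝ) (hm : 0 < m) (θ : X → Fin m → ℝ) (x : X) :
    IsProbabilityMeasure (bellman P γ (paramDist θ) x) := by
  constructor
  have hm' : (m : ℝ≥0∞) ≠ 0 := by exact_mod_cast hm.ne'
  simp [bellman_paramDist_apply P γ θ x MeasurableSet.univ, ENNReal.inv_mul_cancel hm']

lemma cdf_bellman_le_of_le_add {P : X → Measure (ℝ × X)} (hP : ∀ x, IsProbabilityMeasure (P x))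
    {γ : ℝ} (hγ : 0 ≤ γ) (hm : 0 < m) {θ θ' : X → Fin m → ℝ} {c : ℝ}
    (h : ∀ x i, θ x i ≤ θ' x i + c) (x : X) (z : ℝ) :
    cdf (bellman P γ (paramDist θ') x) z ≤ cdf (bellman P γ (paramDist θ) x) (z + γ * c) := by
  have := isProbabilityMeasure_bellman_paramDist hP γ hm θ x
  have := isProbabilityMeasure_bellman_paramDist hP γ hm θ' x
  rw [cdf_eq_real, cdf_eq_real, measureReal_def, measureReal_def]
  refine ENNReal.toReal_mono (measure_ne_top _ _) ?_
  rw [bellman_paramDist_apply P γ θ' x measurableSet_Iic,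
    bellman_paramDist_apply P γ θ x measurableSet_Iic]
  refine lintegral_mono fun p => ?_
  gcongr with j
  have := mul_le_mul_of_nonneg_left (h p.2 j) hγ
  by_cases hz : p.1 + γ * θ' p.2 j ≤ z
  · simp [indicator_of_mem, hz, show p.1 + γ * θ p.2 j ≤ z + γ * c by linarith]
  · simp [indicator_of_notMem, hz]

lemma cdf_bellman_anti {P : X → Measure (ℝ × X)} (hP : ∀ x, IsProbabilityMeasure (P x))
    {γ : ℝ} (hγ : 0 ≤ γ) (hm : 0 < m) {θ θ' : X → Fin m → ℝ} (h : θ ≤ θ') (x : X) (z : ℝ) :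
    cdf (bellman P γ (paramDist θ') x) z ≤ cdf (bellman P γ (paramDist θ) x) z := by
  simpa using cdf_bellman_le_of_le_add hP hγ hm (c := 0) (fun x i => by simpa using h x i) x z

end Bellman

section FixedPoint

variable {X : Type*} [MeasurableSpace X] {m : ℕ}

def IsQuantileFixedPoint (P : X → Measure (ℝ × X)) (γ : ℝ) (θ : X → Fin m → ℝ) : Prop :=
  ∀ x i, IsQuantile (bellman P γ (paramDist θ) x) (qlevel m i) (θ x i)

lemma isQuantileFixedPoint_iff {P : X → Measure (ℝ × X)} {γ : ℝ} {θ : X → Fin m → ℝ} :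
    IsQuantileFixedPoint P γ θ ↔ ∀ x i, θ x i ∈
      Icc (invCDF (bellman P γ (paramDist θ) x) (qlevel m i))
        (upInvCDF (bellman P γ (paramDist θ) x) (qlevel m i)) :=
  forall₂_congr fun _ i => isQuantile_iff_mem_Icc (qlevel_pos i) (qlevel_lt_one i)

lemma isQuantileFixedPoint_of_projBellmanParam_eq {P : X → Measure (ℝ × X)} {γ : ℝ}
    {lam θ : X → Fin m → ℝ} (hlam : lam ∈ unitCube X m)
    (hθ : projBellmanParam P γ lam θ = θ) : IsQuantileFixedPoint P γ θ := by
  refine isQuantileFixedPoint_iff.2 fun x i => ?_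
  have hθxi := congrFun₂ hθ x i
  simp only [projBellmanParam, projParam] at hθxi
  rw [← hθxi]
  have hle := invCDF_le_upInvCDF (ν := bellman P γ (paramDist θ) x) (qlevel_pos i) (qlevel_lt_one i)
  obtain ⟨hl₀, hl₁⟩ := hlam x i
  constructor <;> nlinarith

lemma exists_projBellmanParam_eq {P : X → Measure (ℝ × X)} {γ : ℝ} {θ : X → Fin m → ℝ}
    (hθ : IsQuantileFixedPoint P γ θ) : ∃ lam ∈ unitCube X m, projBellmanParam P γ lam θ = θ := by
  choose lam hlam hθlam using fun x i =>
    exists_convex_combination_eq_of_mem_Icc (isQuantileFixedPoint_iff.1 hθ x i)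
  exact ⟨lam, hlam, funext₂ hθlam⟩

variable [Fintype X] [MeasurableSingletonClass X] {P : X → Measure (ℝ × X)} {γ : ℝ}

lemma isClosed_setOf_isQuantileFixedPoint (hP : ∀ x, IsProbabilityMeasure (P x)) (hγ : 0 ≤ γ)
    (hm : 0 < m) : IsClosed {θ : X → Fin m → ℝ | IsQuantileFixedPoint P γ θ} := by
  refine isClosed_of_closure_subset fun θ hθ x i => ?_
  have hclose : ∀ ε > 0, ∃ θ', IsQuantileFixedPoint P γ θ' ∧ ∀ x i, |θ x i - θ' x i| < ε :=
    fun ε hε => (Metric.mem_closure_iff.1 hθ ε hε).imp fun θ' h =>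
      ⟨h.1, fun x i => (abs_sub_le_dist θ θ' x i).trans_lt h.2⟩
  constructor
  · refine le_cdf_of_forall_lt_le_cdf fun y hy => ?_
    set ε := (y - θ x i) / (1 + γ)
    have hε : (1 + γ) * ε = y - θ x i := by simp only [ε]; field_simp
    obtain ⟨θ', hθ', hθθ'⟩ := hclose ε (by positivity)
    calc qlevel m i ≤ cdf (bellman P γ (paramDist θ') x) (θ' x i) := (hθ' x i).1
      _ ≤ cdf (bellman P γ (paramDist θ') x) (y - γ * ε) :=
        (cdf _).mono (by linarith [(abs_lt.1 (hθθ' x i)).1])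
      _ ≤ cdf (bellman P γ (paramDist θ) x) (y - γ * ε + γ * ε) :=
        cdf_bellman_le_of_le_add hP hγ hm (fun x i => by linarith [(abs_lt.1 (hθθ' x i)).2]) x _
      _ = cdf (bellman P γ (paramDist θ) x) y := by rw [sub_add_cancel]
  · intro z hz
    set ε := (θ x i - z) / (1 + γ)
    have hε : (1 + γ) * ε = θ x i - z := by simp only [ε]; field_simp
    obtain ⟨θ', hθ', hθθ'⟩ := hclose ε (by positivity)
    calc cdf (bellman P γ (paramDist θ) x) z
        ≤ cdf (bellman P γ (paramDist θ') x) (z + γ * ε) :=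
          cdf_bellman_le_of_le_add hP hγ hm (fun x i => by linarith [(abs_lt.1 (hθθ' x i)).1]) x _
      _ ≤ qlevel m i := (hθ' x i).2 _ (by linarith [(abs_lt.1 (hθθ' x i)).2])

/-- Knaster–Tarski for the quantile map clamped to the box; the face conditions make the clamp
inactive at a fixed point. -/
lemma exists_isQuantileFixedPoint_mem_Icc (hP : ∀ x, IsProbabilityMeasure (P x)) (hγ : 0 ≤ γ)
    (hm : 0 < m) {l u : X → Fin m → ℝ} (hlu : l ≤ u)
    (hl : ∀ θ ∈ Icc l u, ∀ x i, ∀ y < l x i, cdf (bellman P γ (paramDist θ) x) y ≤ qlevel m i)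
    (hu : ∀ θ ∈ Icc l u, ∀ x i, qlevel m i ≤ cdf (bellman P γ (paramDist θ) x) (u x i)) :
    ∃ θ ∈ Icc l u, IsQuantileFixedPoint P γ θ := by
  let q₁ (θ : X → Fin m → ℝ) x i := invCDF (bellman P γ (paramDist θ) x) (qlevel m i)
  let q₂ (θ : X → Fin m → ℝ) x i := upInvCDF (bellman P γ (paramDist θ) x) (qlevel m i)
  let U (θ : X → Fin m → ℝ) x i :=
    max (l x i) (min (u x i) (max (q₁ θ x i) (min (θ x i) (q₂ θ x i))))
  have hU : Monotone U := fun θ θ' hθθ' x i => by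
    have hcdf := cdf_bellman_anti hP hγ hm hθθ' x
    have := invCDF_le_invCDF (qlevel_pos i) (qlevel_lt_one i) hcdf
    have := upInvCDF_le_upInvCDF (qlevel_pos i) (qlevel_lt_one i) hcdf
    simp only [U, q₁, q₂]
    gcongr
    exact hθθ' x i
  have hmaps : MapsTo U (Icc l u) (Icc l u) := fun θ _ =>
    ⟨fun x i => le_max_left _ _, fun x i => max_le (hlu x i) (min_le_left _ _)⟩
  obtain ⟨θ, hθ, hfix⟩ := exists_fixedPoint_mem_Icc hlu hU hmaps
  refine ⟨θ, hθ, isQuantileFixedPoint_iff.2 fun x i => ?_⟩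
  have h₁ : q₁ θ x i ≤ u x i := invCDF_le (qlevel_pos i) (hu θ hθ x i)
  have h₂ : l x i ≤ q₂ θ x i := le_upInvCDF (qlevel_lt_one i) (hl θ hθ x i)
  have h₁₂ : q₁ θ x i ≤ q₂ θ x i := invCDF_le_upInvCDF (qlevel_pos i) (qlevel_lt_one i)
  have hθxi : max (q₁ θ x i) (min (θ x i) (q₂ θ x i)) = θ x i := by
    conv_rhs => rw [← hfix]
    simp only [U]
    rw [min_eq_right (max_le h₁ ((min_le_left _ _).trans (hθ.2 x i))),
      max_eq_right (le_max_of_le_right (le_min (hθ.1 x i) h₂))]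
  exact ⟨hθxi ▸ le_max_left _ _, hθxi ▸ max_le h₁₂ (min_le_right _ _)⟩

/-- The box `θ ± ε`, moved by `(1 - γ) ε` towards `ϑ` at the coordinates where `|ϑ - θ| = D`,
satisfies the face conditions of `exists_isQuantileFixedPoint_mem_Icc`. -/
lemma exists_isQuantileFixedPoint_near (hP : ∀ x, IsProbabilityMeasure (P x)) (hγ₀ : 0 ≤ γ)
    (hγ₁ : γ < 1) (hm : 0 < m) {θ ϑ : X → Fin m → ℝ} {D ε : ℝ} (hD : 0 < D) (hε : 0 < ε)
    (hεD : ε ≤ (1 - γ) * D) (hθ : IsQuantileFixedPoint P γ θ)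
    (hpos : ∀ x i, ϑ x i - θ x i = D →
      ∀ y < θ x i + (1 - γ) * D, cdf (bellman P γ (paramDist θ) x) y ≤ qlevel m i)
    (hneg : ∀ x i, ϑ x i - θ x i = -D →
      qlevel m i ≤ cdf (bellman P γ (paramDist θ) x) (θ x i - (1 - γ) * D)) :
    ∃ θ', IsQuantileFixedPoint P γ θ' ∧ ∀ x i, |θ' x i - θ x i| ≤ ε ∧
      (ϑ x i - θ x i = D → θ x i + (1 - γ) * ε ≤ θ' x i) ∧
      (ϑ x i - θ x i = -D → θ' x i ≤ θ x i - (1 - γ) * ε) := by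
  have hγε : 0 ≤ γ * ε := by positivity
  have hγε' : γ * ε ≤ ε := by nlinarith
  let l x i := if ϑ x i - θ x i = D then θ x i + (1 - γ) * ε else θ x i - ε
  let u x i := if ϑ x i - θ x i = -D then θ x i - (1 - γ) * ε else θ x i + ε
  have hl : ∀ x i, θ x i - ε ≤ l x i := fun x i => by
    simp only [l]; split_ifs <;> linarith
  have hu : ∀ x i, u x i ≤ θ x i + ε := fun x i => by
    simp only [u]; split_ifs <;> linarith
  have hlu : l ≤ u := fun x i => by
    simp only [l, u]; split_ifs <;> linarith
  have hface_l : ∀ θ' ∈ Icc l u, ∀ x i, ∀ y < l x i,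
      cdf (bellman P γ (paramDist θ') x) y ≤ qlevel m i := fun θ' hθ' x i y hy => by
    refine (cdf_bellman_le_of_le_add hP hγ₀ hm (θ := θ) (c := ε)
      (fun x i => by linarith [hθ'.1 x i, hl x i]) x y).trans ?_
    simp only [l] at hy
    split_ifs at hy with h
    · exact hpos x i h _ (by linarith)
    · exact (hθ x i).2 _ (by linarith)
  have hface_u : ∀ θ' ∈ Icc l u, ∀ x i,
      qlevel m i ≤ cdf (bellman P γ (paramDist θ') x) (u x i) := fun θ' hθ' x i =>
    calc qlevel m i ≤ cdf (bellman P γ (paramDist θ) x) (u x i - γ * ε) := by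
          simp only [u]
          split_ifs with h
          · exact (hneg x i h).trans ((cdf _).mono (by linarith))
          · exact (hθ x i).1.trans ((cdf _).mono (by linarith))
      _ ≤ cdf (bellman P γ (paramDist θ') x) (u x i - γ * ε + γ * ε) :=
          cdf_bellman_le_of_le_add hP hγ₀ hm (fun x i => by linarith [hθ'.2 x i, hu x i]) x _
      _ = cdf (bellman P γ (paramDist θ') x) (u x i) := by rw [sub_add_cancel]
  obtain ⟨θ', hθ', hθ'fix⟩ := exists_isQuantileFixedPoint_mem_Icc hP hγ₀ hm hlu hface_l hface_u
  refine ⟨θ', hθ'fix, fun x i => ⟨abs_le.2 ⟨by linarith [hθ'.1 x i, hl x i],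
    by linarith [hθ'.2 x i, hu x i]⟩, fun h => ?_, fun h => ?_⟩⟩
  · simpa [l, h] using hθ'.1 x i
  · simpa [u, h] using hθ'.2 x i

lemma exists_isQuantileFixedPoint_dist_lt (hP : ∀ x, IsProbabilityMeasure (P x)) (hγ₀ : 0 ≤ γ)
    (hγ₁ : γ < 1) (hm : 0 < m) {θ ϑ : X → Fin m → ℝ} {D : ℝ} (hD : 0 < D)
    (hθ : IsQuantileFixedPoint P γ θ) (hdist : dist ϑ θ ≤ D)
    (hpos : ∀ x i, ϑ x i - θ x i = D →
      ∀ y < θ x i + (1 - γ) * D, cdf (bellman P γ (paramDist θ) x) y ≤ qlevel m i)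
    (hneg : ∀ x i, ϑ x i - θ x i = -D →
      qlevel m i ≤ cdf (bellman P γ (paramDist θ) x) (θ x i - (1 - γ) * D)) :
    ∃ θ', IsQuantileFixedPoint P γ θ' ∧ dist ϑ θ' < D := by
  obtain ⟨ε, hε, hεD, hεgap⟩ := exists_pos_forall_add_lt
    (fun k : X × Fin m => |ϑ k.1 k.2 - θ k.1 k.2|) (D := D) (by nlinarith : 0 < (1 - γ) * D)
  obtain ⟨θ', hθ', hnear⟩ :=
    exists_isQuantileFixedPoint_near hP hγ₀ hγ₁ hm hD hε hεD hθ hpos hneg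
  have hγε : γ * ε < ε := by nlinarith
  refine ⟨θ', hθ', dist_lt_of_forall_abs_sub_lt hD fun x i => ?_⟩
  obtain ⟨hε', hup, hdown⟩ := hnear x i
  have hϑθ := abs_le.1 ((abs_sub_le_dist ϑ θ x i).trans hdist)
  have hθ'θ := abs_le.1 hε'
  rw [abs_lt]
  by_cases h₁ : ϑ x i - θ x i = D
  · have := hup h₁
    constructor <;> nlinarith
  by_cases h₂ : ϑ x i - θ x i = -D
  · have := hdown h₂
    constructor <;> nlinarith
  have hlt : |ϑ x i - θ x i| < D := ((abs_sub_le_dist ϑ θ x i).trans hdist).lt_of_ne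
    fun h => ((abs_eq hD.le).1 h).elim h₁ h₂
  have := hεgap (x, i) hlt
  constructor <;> linarith [neg_abs_le (ϑ x i - θ x i), le_abs_self (ϑ x i - θ x i)]

end FixedPoint

section Dynamics

variable {X : Type*} [MeasurableSpace X] {m : ℕ}

def IsQTDVelocity (P : X → Measure (ℝ × X)) (γ : ℝ) (θ w : X → Fin m → ℝ) : Prop :=
  ∀ x i, w x i ∈ Icc (qlevel m i - cdf (bellman P γ (paramDist θ) x) (θ x i))
    (qlevel m i - Function.leftLim (cdf (bellman P γ (paramDist θ) x)) (θ x i))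

structure IsQTDSolution (P : X → Measure (ℝ × X)) (γ : ℝ) (ϑ g : ℝ → X → Fin m → ℝ) : Prop where
  integrableOn : ∀ t : ℝ, 0 ≤ t → ∀ x i, IntegrableOn (fun s => g s x i) (Icc 0 t)
  eq_add_integral : ∀ t : ℝ, 0 ≤ t → ∀ x i, ϑ t x i = ϑ 0 x i + ∫ s in Ioc 0 t, g s x i
  ae_isQTDVelocity : ∀ᵐ s ∂volume.restrict (Ici 0), IsQTDVelocity P γ (ϑ s) (g s)

variable {P : X → Measure (ℝ × X)} {γ : ℝ}

namespace IsQTDSolution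

variable {ϑ g : ℝ → X → Fin m → ℝ}

lemma sub_eq_integral (h : IsQTDSolution P γ ϑ g) {a b : ℝ} (ha : 0 ≤ a) (hab : a ≤ b)
    (x : X) (i : Fin m) : ϑ b x i - ϑ a x i = ∫ s in Ioc a b, g s x i := by
  have hint : ∀ t, 0 ≤ t → IntervalIntegrable (fun s => g s x i) volume 0 t := fun t ht =>
    (intervalIntegrable_iff_integrableOn_Icc_of_le ht).2 (h.integrableOn t ht x i)
  rw [h.eq_add_integral b (ha.trans hab), h.eq_add_integral a ha, ← intervalIntegral.integral_of_le
    (ha.trans hab), ← intervalIntegral.integral_of_le ha, ← intervalIntegral.integral_of_le hab,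
    ← intervalIntegral.integral_interval_sub_left (hint b (ha.trans hab)) (hint a ha)]
  ring

lemma continuousOn (h : IsQTDSolution P γ ϑ g) {b : ℝ} (hb : 0 ≤ b) : ContinuousOn ϑ (Icc 0 b) := by
  refine continuousOn_pi.2 fun x => continuousOn_pi.2 fun i => ?_
  have := intervalIntegral.continuousOn_primitive_interval
    (uIcc_of_le hb ▸ h.integrableOn b hb x i)
  rw [uIcc_of_le hb] at this
  exact (this.const_add (ϑ 0 x i)).congr fun t ht => by
    simp only [h.eq_add_integral t ht.1, intervalIntegral.integral_of_le ht.1]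

lemma ae_isQTDVelocity_Ioc (h : IsQTDSolution P γ ϑ g) {s t : ℝ} (hs : 0 ≤ s) :
    ∀ᵐ v ∂volume.restrict (Ioc s t), v ∈ Ioc s t ∧ IsQTDVelocity P γ (ϑ v) (g v) :=
  (ae_restrict_mem measurableSet_Ioc).and (ae_restrict_of_ae_restrict_of_subset
    (fun _ hv => hs.trans hv.1.le) h.ae_isQTDVelocity)

end IsQTDSolution

variable [Fintype X] [MeasurableSingletonClass X] {θ θ' w : X → Fin m → ℝ}

lemma IsQTDVelocity.mul_nonpos (hw : IsQTDVelocity P γ θ w) (hP : ∀ x, IsProbabilityMeasure (P x))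
    (hγ : 0 ≤ γ) (hm : 0 < m) (hθ' : IsQuantileFixedPoint P γ θ') {c σ : ℝ} (hσ : |σ| = 1)
    (hc : dist θ θ' ≤ c) {x : X} {i : Fin m} (h : γ * c < σ * (θ x i - θ' x i)) :
    σ * w x i ≤ 0 := by
  have hθθ' := fun x i => abs_le.1 ((abs_sub_le_dist θ θ' x i).trans hc)
  rcases (abs_eq zero_le_one).1 hσ with rfl | rfl
  · have : qlevel m i ≤ Function.leftLim (cdf (bellman P γ (paramDist θ) x)) (θ x i) :=
      calc qlevel m i ≤ cdf (bellman P γ (paramDist θ') x) (θ' x i) := (hθ' x i).1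
        _ ≤ cdf (bellman P γ (paramDist θ) x) (θ' x i + γ * c) :=
          cdf_bellman_le_of_le_add hP hγ hm (fun x i => by linarith [hθθ' x i]) x _
        _ ≤ _ := (cdf _).mono.le_leftLim (by linarith)
    linarith [(hw x i).2]
  · have : cdf (bellman P γ (paramDist θ) x) (θ x i) ≤ qlevel m i :=
      (cdf_bellman_le_of_le_add hP hγ hm (c := c) (fun x i => by linarith [hθθ' x i]) x _).trans
        ((hθ' x i).2 _ (by linarith))
    linarith [(hw x i).1]

lemma IsQTDVelocity.cdf_le_of_sub_eq (hw : IsQTDVelocity P γ θ w)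
    (hP : ∀ x, IsProbabilityMeasure (P x)) (hγ : 0 ≤ γ) (hm : 0 < m) {D : ℝ}
    (hD : dist θ θ' ≤ D) {x : X} {i : Fin m} (hw₀ : w x i = 0) (h : θ x i - θ' x i = D) :
    ∀ y < θ' x i + (1 - γ) * D, cdf (bellman P γ (paramDist θ') x) y ≤ qlevel m i := fun y hy =>
  calc cdf (bellman P γ (paramDist θ') x) y
      ≤ cdf (bellman P γ (paramDist θ) x) (y + γ * D) := cdf_bellman_le_of_le_add hP hγ hm
        (fun x i => by linarith [(abs_le.1 ((abs_sub_le_dist θ θ' x i).trans hD)).2]) x y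
    _ ≤ Function.leftLim (cdf (bellman P γ (paramDist θ) x)) (θ x i) :=
        (cdf _).mono.le_leftLim (by linarith)
    _ ≤ qlevel m i := by linarith [(hw x i).2]

lemma IsQTDVelocity.le_cdf_of_sub_eq_neg (hw : IsQTDVelocity P γ θ w)
    (hP : ∀ x, IsProbabilityMeasure (P x)) (hγ : 0 ≤ γ) (hm : 0 < m) {D : ℝ}
    (hD : dist θ θ' ≤ D) {x : X} {i : Fin m} (hw₀ : w x i = 0) (h : θ x i - θ' x i = -D) :
    qlevel m i ≤ cdf (bellman P γ (paramDist θ') x) (θ' x i - (1 - γ) * D) :=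
  calc qlevel m i ≤ cdf (bellman P γ (paramDist θ) x) (θ x i) := by linarith [(hw x i).1]
    _ ≤ cdf (bellman P γ (paramDist θ') x) (θ x i + γ * D) := cdf_bellman_le_of_le_add hP hγ hm
        (fun x i => by linarith [(abs_le.1 ((abs_sub_le_dist θ θ' x i).trans hD)).1]) x _
    _ = cdf (bellman P γ (paramDist θ') x) (θ' x i - (1 - γ) * D) := by congr 1; linarith

namespace IsQTDSolution

variable {ϑ g : ℝ → X → Fin m → ℝ}

lemma mul_sub_le (h : IsQTDSolution P γ ϑ g) (hP : ∀ x, IsProbabilityMeasure (P x))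
    (hγ : 0 ≤ γ) (hm : 0 < m) (hθ : IsQuantileFixedPoint P γ θ) {σ : ℝ} (hσ : |σ| = 1)
    {a b C : ℝ} (ha : 0 ≤ a) (hab : a ≤ b) (hC : ∀ v ∈ Icc a b, dist (ϑ v) θ ≤ C)
    (x : X) (i : Fin m) :
    σ * (ϑ b x i - θ x i) ≤ max (γ * C) (σ * (ϑ a x i - θ x i)) := by
  refine le_of_ae_nonpos_above (f := fun v => σ * (ϑ v x i - θ x i)) (φ := fun s => σ * g s x i)
    hab ?_ (fun v hv => ?_) (le_max_right _ _) ?_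
  · have hϑ := (h.continuousOn (ha.trans hab)).mono (Icc_subset_Icc_left ha)
    exact continuousOn_const.mul
      ((continuousOn_pi.1 (continuousOn_pi.1 hϑ x) i).sub continuousOn_const)
  · rw [integral_const_mul, ← h.sub_eq_integral (ha.trans hv.1) hv.2]
    ring
  · filter_upwards [h.ae_isQTDVelocity_Ioc ha] with v ⟨hv, hvel⟩ hM
    exact hvel.mul_nonpos hP hγ hm hθ hσ (hC v (Ioc_subset_Icc_self hv))
      ((le_max_left _ _).trans_lt hM)

lemma antitoneOn_dist (h : IsQTDSolution P γ ϑ g) (hP : ∀ x, IsProbabilityMeasure (P x))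
    (hγ₀ : 0 ≤ γ) (hγ₁ : γ < 1) (hm : 0 < m) (hθ : IsQuantileFixedPoint P γ θ) :
    AntitoneOn (fun t => dist (ϑ t) θ) (Ici 0) := by
  intro a ha b _ hab
  by_contra! hlt
  obtain ⟨c, hc, hmax⟩ := isCompact_Icc.exists_isMaxOn (f := fun t => dist (ϑ t) θ)
    (nonempty_Icc.2 hab) ((continuous_id.dist continuous_const).comp_continuousOn
      ((h.continuousOn (ha.trans hab)).mono (Icc_subset_Icc_left ha)))
  have haC : dist (ϑ a) θ < dist (ϑ c) θ := hlt.trans_le (hmax ⟨hab, le_rfl⟩)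
  have hCpos := dist_nonneg.trans_lt haC
  obtain ⟨x, i, hxi⟩ := exists_abs_sub_eq_dist hCpos
  obtain ⟨σ, hσ, hσxi⟩ := exists_abs_eq_one_and_mul_eq_abs (ϑ c x i - θ x i)
  have hup := h.mul_sub_le hP hγ₀ hm hθ hσ ha hc.1 (C := dist (ϑ c) θ)
    (fun v hv => hmax ⟨hv.1, hv.2.trans hc.2⟩) x i
  have ha' := (mul_le_abs_of_abs_eq_one hσ _).trans (abs_sub_le_dist (ϑ a) θ x i)
  rw [hσxi, hxi] at hup
  exact hup.not_gt (max_lt (by nlinarith) (ha'.trans_lt haC))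

/-- Above `γ D` the coordinate is pushed back towards `θ`, so it cannot have climbed to `D` inside
`[s, t]`; its velocity then has a sign and integrates to zero. -/
lemma frozen_of_mul_sub_eq (h : IsQTDSolution P γ ϑ g) (hP : ∀ x, IsProbabilityMeasure (P x))
    (hγ₀ : 0 ≤ γ) (hγ₁ : γ < 1) (hm : 0 < m) (hθ : IsQuantileFixedPoint P γ θ) {s t D σ : ℝ}
    (hs : 0 ≤ s) (hst : s ≤ t) (hD : 0 < D) (hconst : ∀ v ∈ Icc s t, dist (ϑ v) θ = D)
    (hσ : |σ| = 1) {x : X} {i : Fin m} (ht : σ * (ϑ t x i - θ x i) = D) :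
    (∀ v ∈ Icc s t, ϑ v x i = ϑ t x i) ∧ ∀ᵐ v ∂volume.restrict (Ioc s t), g v x i = 0 := by
  have hγD : γ * D < D := by nlinarith
  have hσ₀ : σ ≠ 0 := by rintro rfl; simp at hσ
  have hfrozen : ∀ v ∈ Icc s t, σ * (ϑ v x i - θ x i) = D := fun v hv => by
    refine le_antisymm ((mul_le_abs_of_abs_eq_one hσ _).trans
      ((abs_sub_le_dist _ _ x i).trans (hconst v hv).le)) ?_
    have := h.mul_sub_le hP hγ₀ hm hθ hσ (hs.trans hv.1) hv.2
      (fun u hu => (hconst u ⟨hv.1.trans hu.1, hu.2⟩).le) x i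
    rw [ht] at this
    exact (le_max_iff.1 this).resolve_left hγD.not_ge
  refine ⟨fun v hv => ?_, ?_⟩
  · have := (hfrozen v hv).trans (hfrozen t ⟨hst, le_rfl⟩).symm
    linarith [mul_left_cancel₀ hσ₀ this]
  have hnonpos : ∀ᵐ v ∂volume.restrict (Ioc s t), 0 ≤ -(σ * g v x i) := by
    filter_upwards [h.ae_isQTDVelocity_Ioc hs] with v ⟨hv, hvel⟩
    have hv' := Ioc_subset_Icc_self hv
    exact neg_nonneg.2 (hvel.mul_nonpos hP hγ₀ hm hθ hσ (hconst v hv').le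
      (by rw [hfrozen v hv']; exact hγD))
  have hint : IntegrableOn (fun v => -(σ * g v x i)) (Ioc s t) :=
    ((h.integrableOn t (hs.trans hst) x i).mono_set
      (Ioc_subset_Icc_self.trans (Icc_subset_Icc_left hs))).const_mul σ |>.neg
  have hzero : ∫ v in Ioc s t, -(σ * g v x i) = 0 := by
    rw [integral_neg, integral_const_mul, ← h.sub_eq_integral hs hst]
    linarith [hfrozen s ⟨le_rfl, hst⟩]
  filter_upwards [(integral_eq_zero_iff_of_nonneg_ae hnonpos hint).1 hzero] with v hv
  simpa [hσ₀] using hv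

/-- If the distance to `θ` does not drop on `[s, t]`, a time in `[s, t]` at which the coordinates
frozen at that distance have zero velocity supplies the slack for
`QTD.exists_isQuantileFixedPoint_dist_lt`. -/
lemma exists_isQuantileFixedPoint_dist_lt (h : IsQTDSolution P γ ϑ g)
    (hP : ∀ x, IsProbabilityMeasure (P x)) (hγ₀ : 0 ≤ γ) (hγ₁ : γ < 1) (hm : 0 < m)
    (hθ : IsQuantileFixedPoint P γ θ) {s t : ℝ} (hs : 0 ≤ s) (hst : s < t)
    (hD : 0 < dist (ϑ s) θ) :
    ∃ θ', IsQuantileFixedPoint P γ θ' ∧ dist (ϑ t) θ' < dist (ϑ s) θ := by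
  set D := dist (ϑ s) θ
  have hanti := h.antitoneOn_dist hP hγ₀ hγ₁ hm hθ
  rcases (hanti hs (hs.trans hst.le) hst.le).lt_or_eq with hlt | heq
  · exact ⟨θ, hθ, hlt⟩
  replace heq : dist (ϑ t) θ = D := heq
  have hconst : ∀ v ∈ Icc s t, dist (ϑ v) θ = D := fun v hv =>
    le_antisymm (hanti hs (hs.trans hv.1) hv.1) (heq ▸ hanti (hs.trans hv.1) (hs.trans hst.le) hv.2)
  have hfrozen : ∀ x i, ∀ᵐ v ∂volume.restrict (Ioc s t),
      |ϑ t x i - θ x i| = D → ϑ v x i = ϑ t x i ∧ g v x i = 0 := by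
    intro x i
    by_cases hxi : |ϑ t x i - θ x i| = D
    · obtain ⟨σ, hσ, hσxi⟩ := exists_abs_eq_one_and_mul_eq_abs (ϑ t x i - θ x i)
      obtain ⟨hϑ, hg⟩ := h.frozen_of_mul_sub_eq hP hγ₀ hγ₁ hm hθ hs hst.le hD hconst hσ
        (hσxi.trans hxi)
      filter_upwards [hg, ae_restrict_mem measurableSet_Ioc] with v hv hvm _
      exact ⟨hϑ v (Ioc_subset_Icc_self hvm), hv⟩
    · exact Eventually.of_forall fun _ h' => absurd h' hxi
  have : (ae (volume.restrict (Ioc s t))).NeBot := ae_restrict_neBot.2 (by simp [hst])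
  obtain ⟨v, ⟨hv, hvel⟩, hvfrozen⟩ := ((h.ae_isQTDVelocity_Ioc hs).and
    (ae_all_iff.2 fun x => ae_all_iff.2 (hfrozen x))).exists
  have hvD := (hconst v (Ioc_subset_Icc_self hv)).le
  refine QTD.exists_isQuantileFixedPoint_dist_lt hP hγ₀ hγ₁ hm hD hθ heq.le
    (fun x i hxi => ?_) (fun x i hxi => ?_)
  · obtain ⟨hϑ, hg⟩ := hvfrozen x i (by rw [hxi, abs_of_pos hD])
    exact hvel.cdf_le_of_sub_eq hP hγ₀ hm hvD hg (hϑ ▸ hxi)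
  · obtain ⟨hϑ, hg⟩ := hvfrozen x i (by rw [hxi, abs_neg, abs_of_pos hD])
    exact hvel.le_cdf_of_sub_eq_neg hP hγ₀ hm hvD hg (hϑ ▸ hxi)

end IsQTDSolution

end Dynamics

end QTD

open QTD

theorem qtd_di_lyapunov_general
    {X : Type*} [Fintype X] [MeasurableSpace X] [MeasurableSingletonClass X]
    (P : X → Measure (ℝ × X)) (hP : ∀ x, IsProbabilityMeasure (P x))
    (γ : ℝ) (hγ0 : 0 ≤ γ) (hγ1 : γ < 1) {m : ℕ} (hm : 0 < m)
    (θhat : (X → Fin m → ℝ) → X → Fin m → ℝ)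
    (hθhat : ∀ lam ∈ unitCube X m,
      projBellmanParam P γ lam (θhat lam) = θhat lam)
    (hθhatUnique : ∀ lam ∈ unitCube X m, ∀ θ : X → Fin m → ℝ,
      projBellmanParam P γ lam θ = θ → θ = θhat lam)
    (Λ : Set (X → Fin m → ℝ))
    (hΛ : Λ = {θ | ∃ lam ∈ unitCube X m, θ = θhat lam})
    (L : (X → Fin m → ℝ) → ℝ)
    (hL : ∀ θ, L θ = sInf {r : ℝ | ∃ lam ∈ unitCube X m,
        r = ⨆ x : X, ⨆ i : Fin m, |θ x i - θhat lam x i|}) :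
    Continuous L ∧ (∀ θ, 0 ≤ L θ) ∧ (∀ θ, L θ = 0 ↔ θ ∈ Λ) ∧
    ∀ (ϑ g : ℝ → X → Fin m → ℝ),
      (∀ t : ℝ, 0 ≤ t → ∀ x i,
        MeasureTheory.IntegrableOn (fun s => g s x i) (Set.Icc (0:ℝ) t)) →
      (∀ t : ℝ, 0 ≤ t → ∀ x i,
        ϑ t x i = ϑ 0 x i + ∫ s in Set.Ioc (0:ℝ) t, g s x i) →
      (∀ᵐ s ∂(MeasureTheory.volume.restrict (Set.Ici (0:ℝ))), ∀ x i,
        g s x i ∈ Set.Icc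
          (qlevel m i - cdf (bellman P γ (paramDist (ϑ s)) x) (ϑ s x i))
          (qlevel m i - Function.leftLim
            (fun t => cdf (bellman P γ (paramDist (ϑ s)) x) t) (ϑ s x i))) →
      ∀ s t : ℝ, 0 ≤ s → s < t → ϑ s ∉ Λ → L (ϑ t) < L (ϑ s) := by
  have hΛfix : Λ = {θ | IsQuantileFixedPoint P γ θ} := by
    refine hΛ.trans (Set.ext fun θ => ⟨?_, fun hθ => ?_⟩)
    · rintro ⟨lam, hlam, rfl⟩
      exact isQuantileFixedPoint_of_projBellmanParam_eq hlam (hθhat lam hlam)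
    · obtain ⟨lam, hlam, hfix⟩ := exists_projBellmanParam_eq hθ
      exact ⟨lam, hlam, hθhatUnique lam hlam θ hfix⟩
  have hclosed : IsClosed Λ := hΛfix ▸ isClosed_setOf_isQuantileFixedPoint hP hγ0 hm
  have hne : Λ.Nonempty := ⟨θhat 0, hΛ ▸ ⟨0, fun _ _ => ⟨le_rfl, zero_le_one⟩, rfl⟩⟩
  obtain rfl : L = fun θ => Metric.infDist θ Λ := by
    funext θ
    rw [hL, Metric.infDist_eq_iInf, ← sInf_image']
    congr 1
    ext r
    simp [hΛ, iSup_iSup_abs_sub_eq_dist, eq_comm]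
  refine ⟨Metric.continuous_infDist_pt Λ, fun _ => Metric.infDist_nonneg,
    fun _ => (hclosed.mem_iff_infDist_zero hne).symm, ?_⟩
  intro ϑ g hgint hϑeq hDI s t hs hst hsΛ
  obtain ⟨θ, hθΛ, hθ⟩ := hclosed.exists_infDist_eq_dist hne (ϑ s)
  obtain ⟨θ', hθ', hlt⟩ := IsQTDSolution.exists_isQuantileFixedPoint_dist_lt ⟨hgint, hϑeq, hDI⟩
    hP hγ0 hγ1 hm (hΛfix ▸ hθΛ) hs hst (hθ ▸ (hclosed.notMem_iff_infDist_pos hne).1 hsΛ)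
  calc Metric.infDist (ϑ t) Λ ≤ dist (ϑ t) θ' := Metric.infDist_le_dist_of_mem (hΛfix ▸ hθ')
    _ < dist (ϑ s) θ := hlt
    _ = Metric.infDist (ϑ s) Λ := hθ.symm

/-- Lyapunov function for the QTD differential inclusion:
`L(θ) = min_{λ ∈ [0,1]^{X×[m]}} ‖θ − θ̂^π_λ‖_∞` is continuous, nonnegative, vanishes exactly on
the set `Λ` of QDP fixed points, and strictly decreases along any solution of the QTD
differential inclusion started outside `Λ`. -/
theorem qtd_di_lyapunov
    {X : Type*} [Fintype X] [Nonempty X] [MeasurableSpace X] [MeasurableSingletonClass X]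
    (P : X → Measure (ℝ × X)) (hP : ∀ x, IsProbabilityMeasure (P x))
    (hPmean : ∀ x, Integrable (fun p : ℝ × X => p.1) (P x))
    (γ : ℝ) (hγ0 : 0 ≤ γ) (hγ1 : γ < 1) {m : ℕ} (hm : 0 < m)
    (θhat : (X → Fin m → ℝ) → X → Fin m → ℝ)
    (hθhat : ∀ lam ∈ unitCube X m,
      projBellmanParam P γ lam (θhat lam) = θhat lam)
    (hθhatUnique : ∀ lam ∈ unitCube X m, ∀ θ : X → Fin m → ℝ,
      projBellmanParam P γ lam θ = θ → θ = θhat lam)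
    (Λ : Set (X → Fin m → ℝ))
    (hΛ : Λ = {θ | ∃ lam ∈ unitCube X m, θ = θhat lam})
    (L : (X → Fin m → ℝ) → ℝ)
    (hL : ∀ θ, L θ = sInf {r : ℝ | ∃ lam ∈ unitCube X m,
        r = ⨆ x : X, ⨆ i : Fin m, |θ x i - θhat lam x i|}) :
    Continuous L ∧ (∀ θ, 0 ≤ L θ) ∧ (∀ θ, L θ = 0 ↔ θ ∈ Λ) ∧
    ∀ (ϑ g : ℝ → X → Fin m → ℝ),
      (∀ t : ℝ, 0 ≤ t → ∀ x i,
        MeasureTheory.IntegrableOn (fun s => g s x i) (Set.Icc (0:ℝ) t)) →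
      (∀ t : ℝ, 0 ≤ t → ∀ x i,
        ϑ t x i = ϑ 0 x i + ∫ s in Set.Ioc (0:ℝ) t, g s x i) →
      (∀ᵐ s ∂(MeasureTheory.volume.restrict (Set.Ici (0:ℝ))), ∀ x i,
        g s x i ∈ Set.Icc
          (qlevel m i - cdf (bellman P γ (paramDist (ϑ s)) x) (ϑ s x i))
          (qlevel m i - Function.leftLim
            (fun t => cdf (bellman P γ (paramDist (ϑ s)) x) t) (ϑ s x i))) →
      ∀ s t : ℝ, 0 ≤ s → s < t → ϑ s ∉ Λ → L (ϑ t) < L (ϑ s) :=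
  qtd_di_lyapunov_general P hP γ hγ0 hγ1 hm θhat hθhat hθhatUnique Λ hΛ L hL
end

section
/- Principal submatrices of the resolvent of a strictly substochastic matrix: let Q₁ ∈ ℝ^{n×n} be strictly substochastic (all entries nonnegative and every row sum strictly less than 1), and let K ⊆ {1,…,n}. Then I − Q₁ is invertible, and there exists a strictly substochastic matrix Q₂ ∈ ℝ^{K×K} such that the principal submatrix of (I − Q₁)⁻¹ on the rows and columns indexed by K equals (I − Q₂)⁻¹. -/
/-!
A maximum principle drives everything: if `x = Q x + c` with `c ≥ 0` and `Q` strictly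
substochastic, then `x ≥ 0`, since at a coordinate where `x` is minimal and negative, `(Q x) i`
is at least `x i` times a row sum `< 1`. Hence `I - Q` has trivial kernel and a nonnegative inverse.

Split the indices into `K` and its complement and write `Q₁ = [A B; C D]`. The `K`-block of
`(I - Q₁)⁻¹` is the inverse of the Schur complement `I - Q₂`, where `Q₂ = A + B (I - D)⁻¹ C` is
Meyer's stochastic complement. It is nonnegative, and its row sums are those of `A 1 + B u` with
`u = (I - D)⁻¹ C 1`. Since `1 - u = (I - D)⁻¹ (1 - D 1 - C 1)` is nonnegative, `u ≤ 1`, so the row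
sums of `Q₂` are at most those of `Q₁`.
-/

open Matrix

def IsStrictlySubstochastic {ι : Type*} [Fintype ι] (Q : Matrix ι ι ℝ) : Prop :=
  (∀ i j, 0 ≤ Q i j) ∧ ∀ i, ∑ j, Q i j < 1

namespace Matrix

theorem submatrix_sumCompl_eq_fromBlocks {ι α : Type*} (p : ι → Prop) [DecidablePred p]
    (M : Matrix ι ι α) :
    M.submatrix (Equiv.sumCompl p) (Equiv.sumCompl p) =
      fromBlocks (M.toBlock p p) (M.toBlock p (¬p ·)) (M.toBlock (¬p ·) p)
        (M.toBlock (¬p ·) (¬p ·)) := by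
  ext (i | i) (j | j) <;> rfl

theorem toBlock_mulVec_one_add_toBlock_mulVec_one {ι R : Type*} [Fintype ι]
    [NonAssocSemiring R] (M : Matrix ι ι R) (q p : ι → Prop) [DecidablePred p]
    (i : {a // q a}) :
    (M.toBlock q p *ᵥ 1) i + (M.toBlock q (¬p ·) *ᵥ 1) i = (M *ᵥ 1) i := by
  simpa [mulVec, dotProduct] using Fintype.sum_subtype_add_sum_subtype p (M i)

section Nonneg

variable {l m n R : Type*} [Fintype m] [Semiring R] [PartialOrder R] [IsOrderedRing R]

theorem mulVec_nonneg_of_nonneg {M : Matrix l m R} (hM : ∀ i j, 0 ≤ M i j) {x : m → R}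
    (hx : 0 ≤ x) : 0 ≤ M *ᵥ x :=
  fun i => Finset.sum_nonneg fun j _ => mul_nonneg (hM i j) (hx j)

theorem mul_apply_nonneg_of_nonneg {M : Matrix l m R} {N : Matrix m n R}
    (hM : ∀ i j, 0 ≤ M i j) (hN : ∀ i j, 0 ≤ N i j) (i : l) (j : n) : 0 ≤ (M * N) i j :=
  Finset.sum_nonneg fun k _ => mul_nonneg (hM i k) (hN k j)

end Nonneg

variable {ι R : Type*} [Fintype ι] [DecidableEq ι] [CommRing R] (p : ι → Prop) [DecidablePred p]

theorem toBlock_inv_eq_inv_schur {M : Matrix ι ι R} (hM : IsUnit M)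
    (hD : IsUnit (M.toBlock (¬p ·) (¬p ·))) :
    M⁻¹.toBlock p p = (M.toBlock p p -
      M.toBlock p (¬p ·) * (M.toBlock (¬p ·) (¬p ·))⁻¹ * M.toBlock (¬p ·) p)⁻¹ := by
  let := hM.invertible
  let := hD.invertible
  let e := Equiv.sumCompl p
  let : Invertible (fromBlocks (M.toBlock p p) (M.toBlock p (¬p ·)) (M.toBlock (¬p ·) p)
      (M.toBlock (¬p ·) (¬p ·))) :=
    (submatrixEquivInvertible M e e).copy _ (submatrix_sumCompl_eq_fromBlocks p M).symm
  let := invertibleOfFromBlocks₂₂Invertible (M.toBlock p p) (M.toBlock p (¬p ·))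
    (M.toBlock (¬p ·) p) (M.toBlock (¬p ·) (¬p ·))
  have hblocks : M⁻¹.submatrix e e = ⅟(fromBlocks (M.toBlock p p) (M.toBlock p (¬p ·))
      (M.toBlock (¬p ·) p) (M.toBlock (¬p ·) (¬p ·))) := by
    rw [invOf_eq_nonsing_inv, ← submatrix_sumCompl_eq_fromBlocks, inv_submatrix_equiv]
  have := congrArg toBlocks₁₁ hblocks
  rwa [invOf_fromBlocks₂₂_eq, toBlocks_fromBlocks₁₁, invOf_eq_nonsing_inv,
    invOf_eq_nonsing_inv] at this

/-- Meyer's stochastic complement of the block `p`: the transition matrix of the chain observed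
only while it is in `p`. -/
noncomputable def stochasticComplement (Q : Matrix ι ι R) : Matrix {i // p i} {i // p i} R :=
  Q.toBlock p p + Q.toBlock p (¬p ·) * (1 - Q.toBlock (¬p ·) (¬p ·))⁻¹ * Q.toBlock (¬p ·) p

theorem toBlock_inv_one_sub {Q : Matrix ι ι R} (hQ : IsUnit (1 - Q))
    (hD : IsUnit (1 - Q.toBlock (¬p ·) (¬p ·))) :
    (1 - Q)⁻¹.toBlock p p = (1 - stochasticComplement p Q)⁻¹ := by
  have hsub (q r : ι → Prop) :
      (1 - Q).toBlock q r = (1 : Matrix ι ι R).toBlock q r - Q.toBlock q r := rfl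
  have hoff₁₂ : (1 : Matrix ι ι R).toBlock p (¬p ·) = 0 :=
    toBlock_one_disjoint disjoint_compl_right
  have hoff₂₁ : (1 : Matrix ι ι R).toBlock (¬p ·) p = 0 :=
    toBlock_one_disjoint disjoint_compl_left
  rw [toBlock_inv_eq_inv_schur p hQ (by rwa [hsub, toBlock_one_self]), hsub, hsub, hsub, hsub,
    toBlock_one_self, toBlock_one_self, hoff₁₂, hoff₂₁, stochasticComplement]
  simp only [zero_sub, Matrix.neg_mul, Matrix.mul_neg, neg_neg, sub_sub]

end Matrix

namespace IsStrictlySubstochastic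

variable {ι : Type*} [Fintype ι] {Q : Matrix ι ι ℝ}

theorem mulVec_one_lt_one (hQ : IsStrictlySubstochastic Q) (i : ι) : (Q *ᵥ 1) i < 1 := by
  simpa [mulVec, dotProduct] using hQ.2 i

theorem of_mulVec_one_lt_one (h0 : ∀ i j, 0 ≤ Q i j) (h1 : ∀ i, (Q *ᵥ 1) i < 1) :
    IsStrictlySubstochastic Q :=
  ⟨h0, fun i => by simpa [mulVec, dotProduct] using h1 i⟩

theorem nonneg_of_eq_mulVec_add (hQ : IsStrictlySubstochastic Q) {x c : ι → ℝ}
    (hx : x = Q *ᵥ x + c) (hc : 0 ≤ c) : 0 ≤ x := by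
  by_contra hneg
  obtain ⟨i, hi⟩ : ∃ i, x i < 0 := by simpa [Pi.le_def] using hneg
  obtain ⟨i₀, -, hmin⟩ := Finset.exists_min_image Finset.univ x ⟨i, Finset.mem_univ i⟩
  have hi₀ : x i₀ < 0 := (hmin i (Finset.mem_univ i)).trans_lt hi
  have hrow : (∑ j, Q i₀ j) * x i₀ ≤ (Q *ᵥ x) i₀ := by
    rw [Finset.sum_mul]
    exact Finset.sum_le_sum fun j _ =>
      mul_le_mul_of_nonneg_left (hmin j (Finset.mem_univ j)) (hQ.1 i₀ j)
  have hxi : x i₀ = (Q *ᵥ x) i₀ + c i₀ := congrFun hx i₀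
  have hci : 0 ≤ c i₀ := hc i₀
  nlinarith [mul_pos (sub_pos.2 (hQ.2 i₀)) (neg_pos.2 hi₀)]

theorem toBlock (hQ : IsStrictlySubstochastic Q) (p : ι → Prop) [DecidablePred p] :
    IsStrictlySubstochastic (Q.toBlock p p) := by
  refine of_mulVec_one_lt_one (fun i j => hQ.1 i j) fun i => ?_
  have hsplit := toBlock_mulVec_one_add_toBlock_mulVec_one Q p p i
  have hrest : 0 ≤ (Q.toBlock p (¬p ·) *ᵥ 1) i :=
    mulVec_nonneg_of_nonneg (M := Q.toBlock p (¬p ·)) (fun a b => hQ.1 a b) zero_le_one i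
  linarith [hQ.mulVec_one_lt_one i]

variable [DecidableEq ι]

theorem isUnit_one_sub (hQ : IsStrictlySubstochastic Q) : IsUnit (1 - Q) := by
  rw [isUnit_iff_isUnit_det, isUnit_iff_ne_zero]
  intro hdet
  obtain ⟨v, hv, hQv⟩ := exists_mulVec_eq_zero_iff.mpr hdet
  have hfix (w : ι → ℝ) (hw : (1 - Q) *ᵥ w = 0) : w = Q *ᵥ w + 0 := by
    rw [sub_mulVec, one_mulVec, sub_eq_zero] at hw
    rw [add_zero, ← hw]
  have h₁ := hQ.nonneg_of_eq_mulVec_add (hfix v hQv) le_rfl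
  have h₂ := hQ.nonneg_of_eq_mulVec_add (hfix (-v) (by rw [mulVec_neg, hQv, neg_zero])) le_rfl
  exact hv (le_antisymm (neg_nonneg.mp h₂) h₁)

theorem inv_one_sub_mulVec_nonneg (hQ : IsStrictlySubstochastic Q) {c : ι → ℝ} (hc : 0 ≤ c) :
    0 ≤ (1 - Q)⁻¹ *ᵥ c := by
  refine hQ.nonneg_of_eq_mulVec_add ?_ hc
  have := mulVec_mulVec c (1 - Q) (1 - Q)⁻¹
  rw [mul_nonsing_inv _ ((isUnit_iff_isUnit_det _).mp hQ.isUnit_one_sub), one_mulVec,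
    sub_mulVec, one_mulVec] at this
  exact eq_add_of_sub_eq' this

theorem inv_one_sub_nonneg (hQ : IsStrictlySubstochastic Q) (i j : ι) : 0 ≤ (1 - Q)⁻¹ i j := by
  simpa using hQ.inv_one_sub_mulVec_nonneg (Pi.single_nonneg.mpr zero_le_one) i

theorem stochasticComplement (hQ : IsStrictlySubstochastic Q) (p : ι → Prop)
    [DecidablePred p] : IsStrictlySubstochastic (Q.stochasticComplement p) := by
  set A := Q.toBlock p p
  set B := Q.toBlock p (¬p ·)
  set C := Q.toBlock (¬p ·) p
  set D := Q.toBlock (¬p ·) (¬p ·)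
  have hD : IsStrictlySubstochastic D := hQ.toBlock _
  set E := (1 - D)⁻¹
  have hED : E * (1 - D) = 1 :=
    nonsing_inv_mul _ ((isUnit_iff_isUnit_det _).mp hD.isUnit_one_sub)
  have hu : E *ᵥ (C *ᵥ 1) ≤ 1 := by
    have hexit : 0 ≤ (1 - D) *ᵥ 1 - C *ᵥ 1 := fun k => by
      have := toBlock_mulVec_one_add_toBlock_mulVec_one Q (¬p ·) p k
      simp only [sub_mulVec, one_mulVec, Pi.sub_apply, Pi.zero_apply, Pi.one_apply]
      linarith [hQ.mulVec_one_lt_one k]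
    have := hD.inv_one_sub_mulVec_nonneg hexit
    rwa [mulVec_sub, mulVec_mulVec, hED, one_mulVec, sub_nonneg] at this
  have hBu (i) : (B *ᵥ (E *ᵥ (C *ᵥ 1))) i ≤ (B *ᵥ 1) i := by
    have := mulVec_nonneg_of_nonneg (M := B) (fun a b => hQ.1 a b) (sub_nonneg.mpr hu) i
    rwa [mulVec_sub, Pi.sub_apply, Pi.zero_apply, sub_nonneg] at this
  refine of_mulVec_one_lt_one (fun i j => add_nonneg (hQ.1 _ _) ?_) fun i => ?_
  · exact mul_apply_nonneg_of_nonneg (mul_apply_nonneg_of_nonneg (M := B)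
      (fun a b => hQ.1 a b) hD.inv_one_sub_nonneg) (fun a b => hQ.1 a b) i j
  · have hrow : (Q.stochasticComplement p *ᵥ 1) i = (A *ᵥ 1) i + (B *ᵥ (E *ᵥ (C *ᵥ 1))) i := by
      simp only [Matrix.stochasticComplement, add_mulVec, mulVec_mulVec, Matrix.mul_assoc,
        Pi.add_apply]
      rfl
    linarith [hBu i, toBlock_mulVec_one_add_toBlock_mulVec_one Q p p i, hQ.mulVec_one_lt_one i]

end IsStrictlySubstochastic

/-- For a strictly substochastic matrix `Q₁`, `I - Q₁` is invertible, and any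
principal submatrix of `(I - Q₁)⁻¹` on an index set `K` is of the form `(I - Q₂)⁻¹` for some
strictly substochastic matrix `Q₂` on `K`. -/
theorem substochastic_resolvent_principal_submatrix
    {n : ℕ} (Q₁ : Matrix (Fin n) (Fin n) ℝ) (hQ₁ : IsStrictlySubstochastic Q₁)
    (K : Finset (Fin n)) :
    IsUnit (1 - Q₁) ∧
    ∃ Q₂ : Matrix {i // i ∈ K} {i // i ∈ K} ℝ, IsStrictlySubstochastic Q₂ ∧
      ((1 - Q₁)⁻¹).submatrix (Subtype.val) (Subtype.val) = (1 - Q₂)⁻¹ := by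
  refine ⟨hQ₁.isUnit_one_sub, Q₁.stochasticComplement (· ∈ K), ?_, ?_⟩
  -- `convert` reconciles the instances `Finset.Subtype.fintype K` and `Subtype.fintype (· ∈ K)`
  · convert hQ₁.stochasticComplement (· ∈ K)
  · convert toBlock_inv_one_sub (· ∈ K) hQ₁.isUnit_one_sub (hQ₁.toBlock _).isUnit_one_sub
    rfl
end

section
/- Wasserstein-1 error of quantile projection of a single distribution: let ν be a probability distribution on ℝ supported on [a, b] with a ≤ b, let m ∈ ℕ, τ_i = (2i−1)/(2m), and let λ ∈ [0,1]^m. Define ν̂ = (1/m)·Σ_{i=1}^m δ_{q_i} where q_i = (1−λ_i)·F⁻¹_ν(τ_i) + λ_i·F̄⁻¹_ν(τ_i). Then w_1(ν̂, ν) ≤ (b − a)/(2m). -/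
/-!
On the cell `(i/m, (i+1)/m]` the quantile function of `ν̂` is the constant `q_i`, and `q_i` lies
between `F⁻¹(τ_i)` and `F̄⁻¹(τ_i)` at the midpoint `τ_i` of the cell. Hence on the left half of the
cell `F⁻¹` takes values in `[F̄⁻¹(i/m), q_i]` and on the right half in `[q_i, F⁻¹((i+1)/m)]`, so the
cell contributes at most `(F⁻¹((i+1)/m) - F̄⁻¹(i/m)) / (2m)` to `w_1`. Since `F⁻¹ ≤ F̄⁻¹` at every
level, these contributions telescope to at most `(F⁻¹(1) - F̄⁻¹(0)) / (2m) ≤ (b - a) / (2m)`.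
-/

open MeasureTheory ProbabilityTheory Set
open scoped ENNReal

theorem intervalIntegral.integral_abs_le_mul_of_abs_le {f : ℝ → ℝ} {l r C : ℝ} (hlr : l ≤ r)
    (hf : ∀ t ∈ Ioc l r, |f t| ≤ C) : ∫ t in l..r, |f t| ≤ (r - l) * C := by
  have h := intervalIntegral.norm_integral_le_of_norm_le_const (f := fun t => |f t|)
    (a := l) (b := r) (C := C) (by simpa only [uIoc_of_le hlr, Real.norm_eq_abs, abs_abs])
  rw [Real.norm_eq_abs, abs_of_nonneg (sub_nonneg.2 hlr)] at h
  linarith [le_abs_self (∫ t in l..r, |f t|)]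

theorem Finset.sum_range_succ_sub_le {F G : ℕ → ℝ} {n : ℕ} {a b : ℝ}
    (hFG : ∀ k < n, F (k + 1) ≤ G (k + 1)) (hF : F (n + 1) ≤ b) (hG : a ≤ G 0) :
    ∑ k ∈ Finset.range (n + 1), (F (k + 1) - G k) ≤ b - a := by
  rw [Finset.sum_sub_distrib, Finset.sum_range_succ, Finset.sum_range_succ']
  have := Finset.sum_le_sum fun k hk => hFG k (Finset.mem_range.1 hk)
  linarith

theorem qlevel_sub_div {m : ℕ} (i : Fin m) : qlevel m i - (i : ℝ) / m = 1 / (2 * m) := by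
  have : (m : ℝ) ≠ 0 := Nat.cast_ne_zero.2 (Fin.pos i).ne'
  rw [qlevel]
  field_simp
  ring

theorem add_one_div_sub_qlevel {m : ℕ} (i : Fin m) :
    ((i : ℝ) + 1) / m - qlevel m i = 1 / (2 * m) := by
  have : (m : ℝ) ≠ 0 := Nat.cast_ne_zero.2 (Fin.pos i).ne'
  rw [qlevel]
  field_simp
  ring

theorem cast_add_one_div_le_one {m : ℕ} (i : Fin m) : ((i : ℝ) + 1) / m ≤ 1 := by
  rw [div_le_one (Nat.cast_pos.2 (Fin.pos i))]
  exact_mod_cast i.isLt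

theorem qlevel_strictMono (m : ℕ) : StrictMono (qlevel m) := by
  intro i j hij
  have hm : (0 : ℝ) < 2 * m := by have := Fin.pos i; positivity
  rw [qlevel, qlevel, div_lt_div_iff_of_pos_right hm]
  have : (i : ℝ) < j := by exact_mod_cast hij
  linarith

theorem qlevel_mem_Ioo {m : ℕ} (i : Fin m) : qlevel m i ∈ Ioo 0 1 := by
  have hm : (0 : ℝ) < 2 * m := by have := Fin.pos i; positivity
  refine ⟨by rw [qlevel]; positivity, ?_⟩
  rw [qlevel, div_lt_one hm]
  have : (i : ℝ) + 1 ≤ m := by exact_mod_cast i.isLt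
  linarith

section EmpiricalMeasure

variable {m : ℕ} [NeZero m]

instance isProbabilityMeasure_paramDistOne (q : Fin m → ℝ) :
    IsProbabilityMeasure (paramDistOne q) := by
  constructor
  simp only [paramDistOne, Measure.smul_apply, Measure.coe_finsetSum, Finset.sum_apply,
    measure_univ, Finset.sum_const, Finset.card_univ, Fintype.card_fin, nsmul_eq_mul, mul_one,
    smul_eq_mul]
  exact ENNReal.inv_mul_cancel (by exact_mod_cast NeZero.ne m) (by simp)

theorem cdf_paramDistOne (q : Fin m → ℝ) (y : ℝ) :
    cdf (paramDistOne q) y = (Finset.univ.filter fun i => q i ≤ y).card / m := by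
  have hIic : paramDistOne q (Iic y)
      = (m : ℝ≥0∞)⁻¹ * (Finset.univ.filter fun i => q i ≤ y).card := by
    simp only [paramDistOne, Measure.smul_apply, Measure.coe_finsetSum, Finset.sum_apply,
      Measure.dirac_apply' _ measurableSet_Iic, smul_eq_mul, ← Finset.sum_boole, indicator_apply,
      mem_Iic, Pi.one_apply]
  rw [cdf_eq_real, measureReal_def, hIic, ENNReal.toReal_mul]
  simp [ENNReal.toReal_inv, div_eq_inv_mul]

theorem invCDF_paramDistOne {q : Fin m → ℝ} (hq : Monotone q) (i : Fin m) {t : ℝ}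
    (ht : t ∈ Ioc ((i : ℝ) / m) (((i : ℝ) + 1) / m)) : invCDF (paramDistOne q) t = q i := by
  have hm : (0 : ℝ) < m := Nat.cast_pos.2 (Nat.pos_of_ne_zero (NeZero.ne m))
  refine IsLeast.csInf_eq ⟨?_, fun y hy => ?_⟩
  · have hsub : Finset.Iic i ⊆ Finset.univ.filter fun j => q j ≤ q i :=
      fun j hj => Finset.mem_filter.2 ⟨Finset.mem_univ j, hq (Finset.mem_Iic.1 hj)⟩
    have hcard : (i : ℝ) + 1 ≤ (Finset.univ.filter fun j => q j ≤ q i).card := by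
      have := Finset.card_le_card hsub
      rw [Fin.card_Iic] at this
      exact_mod_cast this
    change t ≤ cdf (paramDistOne q) (q i)
    rw [cdf_paramDistOne]
    exact ht.2.trans (div_le_div_of_nonneg_right hcard hm.le)
  · by_contra! hy'
    have hsub : (Finset.univ.filter fun j => q j ≤ y) ⊆ Finset.Iio i := fun j hj =>
      Finset.mem_Iio.2 <| lt_of_not_ge fun hij =>
        (hy'.trans_le (hq hij)).not_ge (Finset.mem_filter.1 hj).2
    have hcard : ((Finset.univ.filter fun j => q j ≤ y).card : ℝ) ≤ i := by
      have := Finset.card_le_card hsub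
      rw [Fin.card_Iio] at this
      exact_mod_cast this
    have hty : t ≤ cdf (paramDistOne q) y := hy
    rw [cdf_paramDistOne] at hty
    exact ht.1.not_ge (hty.trans (div_le_div_of_nonneg_right hcard hm.le))

theorem integral_Ioo_zero_one_eq_sum {f : ℝ → ℝ}
    (hf : ∀ i : Fin m, IntervalIntegrable f volume ((i : ℝ) / m) (((i : ℝ) + 1) / m)) :
    ∫ t in Ioo 0 1, f t = ∑ i : Fin m, ∫ t in (i : ℝ) / m..((i : ℝ) + 1) / m, f t := by
  have hm : (m : ℝ) ≠ 0 := Nat.cast_ne_zero.2 (NeZero.ne m)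
  have hcast : ∀ k : ℕ, (((k + 1 : ℕ) : ℝ)) / m = ((k : ℝ) + 1) / m := fun k => by push_cast; rfl
  rw [← integral_Ioc_eq_integral_Ioo, ← intervalIntegral.integral_of_le zero_le_one,
    Fin.sum_univ_eq_sum_range (fun k => ∫ t in (k : ℝ) / m..((k : ℝ) + 1) / m, f t)]
  simp only [← hcast]
  rw [intervalIntegral.sum_integral_adjacent_intervals (a := fun k : ℕ => (k : ℝ) / m)
    fun k hk => by simpa only [hcast] using hf ⟨k, hk⟩]
  simp [hm]

end EmpiricalMeasure

section SupportedOnIcc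

variable {ν : Measure ℝ} [IsProbabilityMeasure ν] {a b : ℝ} {m : ℕ}

theorem le_of_cdf_pos (hsupp : ν (Icc a b)ᶜ = 0) {y : ℝ} (hy : 0 < cdf ν y) : a ≤ y := by
  by_contra! hya
  have hIic : ν (Iic y) = 0 :=
    measure_mono_null (fun z hz => fun hz' => absurd (hz'.1.trans hz) (not_le.2 hya)) hsupp
  rw [cdf_eq_real, measureReal_def, hIic, ENNReal.toReal_zero] at hy
  exact lt_irrefl 0 hy

theorem cdf_eq_one_of_le (hsupp : ν (Icc a b)ᶜ = 0) {y : ℝ} (hy : b ≤ y) : cdf ν y = 1 := by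
  have hIic : ν (Iic y) = 1 :=
    (prob_compl_eq_zero_iff measurableSet_Iic).1 <|
      measure_mono_null (fun z hz => fun hz' => hz (hz'.2.trans hy)) hsupp
  rw [cdf_eq_real, measureReal_def, hIic, ENNReal.toReal_one]

theorem setOf_le_cdf_subset_Ici (hsupp : ν (Icc a b)ᶜ = 0) {τ : ℝ} (hτ : 0 < τ) :
    {y | τ ≤ cdf ν y} ⊆ Ici a :=
  fun _ hy => le_of_cdf_pos hsupp (hτ.trans_le hy)

theorem setOf_lt_cdf_subset_Ici (hsupp : ν (Icc a b)ᶜ = 0) {τ : ℝ} (hτ : 0 ≤ τ) :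
    {y | τ < cdf ν y} ⊆ Ici a :=
  fun _ hy => le_of_cdf_pos hsupp (hτ.trans_lt hy)

theorem invCDF_mem_Icc (hsupp : ν (Icc a b)ᶜ = 0) {τ : ℝ} (h0 : 0 < τ) (h1 : τ ≤ 1) :
    invCDF ν τ ∈ Icc a b := by
  have hb : b ∈ {y | τ ≤ cdf ν y} := show τ ≤ cdf ν b by rwa [cdf_eq_one_of_le hsupp le_rfl]
  exact ⟨le_csInf ⟨b, hb⟩ (setOf_le_cdf_subset_Ici hsupp h0),
    csInf_le ⟨a, setOf_le_cdf_subset_Ici hsupp h0⟩ hb⟩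

theorem upInvCDF_mem_Icc (hsupp : ν (Icc a b)ᶜ = 0) {τ : ℝ} (h0 : 0 ≤ τ) (h1 : τ < 1) :
    upInvCDF ν τ ∈ Icc a b := by
  have hb : b ∈ {y | τ < cdf ν y} := show τ < cdf ν b by rwa [cdf_eq_one_of_le hsupp le_rfl]
  exact ⟨le_csInf ⟨b, hb⟩ (setOf_lt_cdf_subset_Ici hsupp h0),
    csInf_le ⟨a, setOf_lt_cdf_subset_Ici hsupp h0⟩ hb⟩

theorem invCDF_le_invCDF (hsupp : ν (Icc a b)ᶜ = 0) {τ τ' : ℝ} (h0 : 0 < τ) (h : τ ≤ τ')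
    (h1 : τ' ≤ 1) : invCDF ν τ ≤ invCDF ν τ' :=
  csInf_le_csInf ⟨a, setOf_le_cdf_subset_Ici hsupp h0⟩
    ⟨b, show τ' ≤ cdf ν b by rwa [cdf_eq_one_of_le hsupp le_rfl]⟩
    fun _ hy => h.trans hy

theorem invCDF_le_upInvCDF (hsupp : ν (Icc a b)ᶜ = 0) {τ : ℝ} (h0 : 0 < τ) (h1 : τ < 1) :
    invCDF ν τ ≤ upInvCDF ν τ :=
  csInf_le_csInf ⟨a, setOf_le_cdf_subset_Ici hsupp h0⟩
    ⟨b, show τ < cdf ν b by rwa [cdf_eq_one_of_le hsupp le_rfl]⟩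
    fun _ (hy : τ < _) => hy.le

theorem upInvCDF_le_invCDF (hsupp : ν (Icc a b)ᶜ = 0) {τ τ' : ℝ} (h0 : 0 ≤ τ) (h : τ < τ')
    (h1 : τ' ≤ 1) : upInvCDF ν τ ≤ invCDF ν τ' :=
  csInf_le_csInf ⟨a, setOf_lt_cdf_subset_Ici hsupp h0⟩
    ⟨b, show τ' ≤ cdf ν b by rwa [cdf_eq_one_of_le hsupp le_rfl]⟩
    fun _ hy => h.trans_le hy

theorem monotone_of_mem_Icc_invCDF_upInvCDF (hsupp : ν (Icc a b)ᶜ = 0) {ι : Type*}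
    [PartialOrder ι] {τ c : ι → ℝ} (hτ : StrictMono τ) (h0 : ∀ i, 0 ≤ τ i) (h1 : ∀ i, τ i ≤ 1)
    (hc : ∀ i, c i ∈ Icc (invCDF ν (τ i)) (upInvCDF ν (τ i))) : Monotone c := by
  intro i j hij
  rcases hij.eq_or_lt with rfl | hlt
  · exact le_rfl
  · exact (hc i).2.trans <| (upInvCDF_le_invCDF hsupp (h0 i) (hτ hlt) (h1 j)).trans (hc j).1

theorem integrableOn_invCDF (hsupp : ν (Icc a b)ᶜ = 0) : IntegrableOn (invCDF ν) (Ioc 0 1) := by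
  have hmono : MonotoneOn (invCDF ν) (Ioc 0 1) := fun _ hx _ hy hxy =>
    invCDF_le_invCDF hsupp hx.1 hxy hy.2
  refine Integrable.mono' (g := fun _ => max |a| |b|)
    (integrableOn_const (by rw [Real.volume_Ioc]; exact ENNReal.ofReal_ne_top))
    (aemeasurable_restrict_of_monotoneOn measurableSet_Ioc hmono).aestronglyMeasurable
    ((ae_restrict_iff' measurableSet_Ioc).2 (ae_of_all _ fun t ht => ?_))
  have h := invCDF_mem_Icc hsupp ht.1 ht.2
  exact abs_le_max_abs_abs h.1 h.2

theorem intervalIntegrable_abs_sub_invCDF (hsupp : ν (Icc a b)ᶜ = 0) (c : ℝ) {l r : ℝ}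
    (hl : 0 ≤ l) (hlr : l ≤ r) (hr : r ≤ 1) :
    IntervalIntegrable (fun t => |c - invCDF ν t|) volume l r := by
  rw [intervalIntegrable_iff_integrableOn_Ioc_of_le hlr]
  exact ((integrableOn_const (by rw [Real.volume_Ioc]; exact ENNReal.ofReal_ne_top)).sub
    ((integrableOn_invCDF hsupp).mono_set (Ioc_subset_Ioc hl hr))).abs

theorem integral_abs_sub_invCDF_le (hsupp : ν (Icc a b)ᶜ = 0) {l τ r c : ℝ} (hl : 0 ≤ l)
    (hlτ : l < τ) (hτr : τ < r) (hr : r ≤ 1)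
    (hc : c ∈ Icc (invCDF ν τ) (upInvCDF ν τ)) :
    ∫ t in l..r, |c - invCDF ν t|
      ≤ (τ - l) * (c - upInvCDF ν l) + (r - τ) * (invCDF ν r - c) := by
  rw [← intervalIntegral.integral_add_adjacent_intervals
    (intervalIntegrable_abs_sub_invCDF hsupp c hl hlτ.le (hτr.trans_le hr).le)
    (intervalIntegrable_abs_sub_invCDF hsupp c (hl.trans hlτ.le) hτr.le hr)]
  refine add_le_add (intervalIntegral.integral_abs_le_mul_of_abs_le hlτ.le fun t ht => ?_)
    (intervalIntegral.integral_abs_le_mul_of_abs_le hτr.le fun t ht => ?_)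
  · have hlow := upInvCDF_le_invCDF hsupp hl ht.1 (ht.2.trans (hτr.trans_le hr).le)
    have hupp := invCDF_le_invCDF hsupp (hl.trans_lt ht.1) ht.2 (hτr.trans_le hr).le
    rw [abs_le]
    constructor <;> linarith [hc.1]
  · have hlow := upInvCDF_le_invCDF hsupp (hl.trans hlτ.le) ht.1 (ht.2.trans hr)
    have hupp := invCDF_le_invCDF hsupp (hl.trans_lt (hlτ.trans ht.1)) ht.2 hr
    rw [abs_le]
    constructor <;> linarith [hc.2]

theorem w1_paramDistOne_eq_sum [NeZero m] (hsupp : ν (Icc a b)ᶜ = 0) {q : Fin m → ℝ}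
    (hq : Monotone q) :
    w1 (paramDistOne q) ν
      = ∑ i : Fin m, ∫ t in (i : ℝ) / m..((i : ℝ) + 1) / m, |q i - invCDF ν t| := by
  have hcell : ∀ i : Fin m, EqOn (fun t => |invCDF (paramDistOne q) t - invCDF ν t|)
      (fun t => |q i - invCDF ν t|) (uIoc ((i : ℝ) / m) (((i : ℝ) + 1) / m)) := fun i t ht => by
    rw [uIoc_of_le (by gcongr; linarith)] at ht
    simp only [invCDF_paramDistOne hq i ht]
  rw [w1, integral_Ioo_zero_one_eq_sum fun i =>
    (intervalIntegrable_abs_sub_invCDF hsupp (q i) (by positivity) (by gcongr; linarith)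
      (cast_add_one_div_le_one i)).congr (hcell i).symm]
  exact Finset.sum_congr rfl fun i _ =>
    intervalIntegral.integral_congr_ae (ae_of_all _ (hcell i))

theorem integral_cell_abs_sub_invCDF_le (hsupp : ν (Icc a b)ᶜ = 0) {i : Fin m} {c : ℝ}
    (hc : c ∈ Icc (invCDF ν (qlevel m i)) (upInvCDF ν (qlevel m i))) :
    ∫ t in (i : ℝ) / m..((i : ℝ) + 1) / m, |c - invCDF ν t|
      ≤ 1 / (2 * m) * (invCDF ν (((i : ℝ) + 1) / m) - upInvCDF ν ((i : ℝ) / m)) := by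
  have hhalf : (0 : ℝ) < 1 / (2 * m) := by have := Fin.pos i; positivity
  have hleft := qlevel_sub_div i
  have hright := add_one_div_sub_qlevel i
  refine (integral_abs_sub_invCDF_le hsupp (by positivity) (by linarith) (by linarith)
    (cast_add_one_div_le_one i) hc).trans_eq ?_
  rw [hleft, hright]
  ring

theorem sum_invCDF_sub_upInvCDF_le [NeZero m] (hsupp : ν (Icc a b)ᶜ = 0) :
    ∑ i : Fin m, (invCDF ν (((i : ℝ) + 1) / m) - upInvCDF ν ((i : ℝ) / m)) ≤ b - a := by
  obtain ⟨n, rfl⟩ := Nat.exists_eq_succ_of_ne_zero (NeZero.ne m)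
  have hm : (0 : ℝ) < n.succ := by positivity
  rw [Fin.sum_univ_eq_sum_range
    (fun k => invCDF ν (((k : ℝ) + 1) / n.succ) - upInvCDF ν ((k : ℝ) / n.succ))]
  refine le_of_eq_of_le ?_ <| Finset.sum_range_succ_sub_le (n := n)
    (F := fun k => invCDF ν ((k : ℝ) / n.succ)) (G := fun k => upInvCDF ν ((k : ℝ) / n.succ))
    (fun k hk => ?_) ?_ ?_
  · push_cast
    rfl
  · refine invCDF_le_upInvCDF hsupp (by positivity) ?_
    rw [div_lt_one hm]
    exact_mod_cast Nat.succ_lt_succ hk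
  · exact (invCDF_mem_Icc hsupp (by positivity) (by rw [div_le_one hm])).2
  · simpa using (upInvCDF_mem_Icc hsupp le_rfl zero_lt_one).1

end SupportedOnIcc

theorem quantile_projection_w1_error_general
    (ν : Measure ℝ) [IsProbabilityMeasure ν]
    (a b : ℝ) (hsupp : ν (Set.Icc a b)ᶜ = 0)
    {m : ℕ} (hm : 0 < m)
    (lam : Fin m → ℝ) (hlam : ∀ i, lam i ∈ Set.Icc (0:ℝ) 1) :
    w1 (paramDistOne (fun i =>
        (1 - lam i) * invCDF ν (qlevel m i) + lam i * upInvCDF ν (qlevel m i))) ν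
      ≤ (b - a) / (2 * m) := by
  have : NeZero m := ⟨hm.ne'⟩
  set q : Fin m → ℝ := fun i =>
    (1 - lam i) * invCDF ν (qlevel m i) + lam i * upInvCDF ν (qlevel m i)
  have hq : ∀ i, q i ∈ Icc (invCDF ν (qlevel m i)) (upInvCDF ν (qlevel m i)) := fun i => by
    have hle := invCDF_le_upInvCDF hsupp (qlevel_mem_Ioo i).1 (qlevel_mem_Ioo i).2
    obtain ⟨hl0, hl1⟩ := hlam i
    constructor <;> nlinarith
  have hq_mono : Monotone q := monotone_of_mem_Icc_invCDF_upInvCDF hsupp (qlevel_strictMono m)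
    (fun i => (qlevel_mem_Ioo i).1.le) (fun i => (qlevel_mem_Ioo i).2.le) hq
  calc w1 (paramDistOne q) ν
      = ∑ i : Fin m, ∫ t in (i : ℝ) / m..((i : ℝ) + 1) / m, |q i - invCDF ν t| :=
        w1_paramDistOne_eq_sum hsupp hq_mono
    _ ≤ ∑ i : Fin m, 1 / (2 * m) * (invCDF ν (((i : ℝ) + 1) / m) - upInvCDF ν ((i : ℝ) / m)) :=
        Finset.sum_le_sum fun i _ => integral_cell_abs_sub_invCDF_le hsupp (hq i)
    _ ≤ 1 / (2 * m) * (b - a) := by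
        rw [← Finset.mul_sum]
        gcongr
        exact sum_invCDF_sub_upInvCDF_le hsupp
    _ = (b - a) / (2 * m) := by ring

/-- Wasserstein-1 error of the quantile projection of a single distribution
supported on `[a, b]`: the uniform m-atom distribution on any interpolated τ_i-quantiles is
within `(b-a)/(2m)` of `ν` in `w_1`. -/
theorem quantile_projection_w1_error
    (ν : Measure ℝ) [IsProbabilityMeasure ν]
    (a b : ℝ) (hab : a ≤ b) (hsupp : ν (Set.Icc a b)ᶜ = 0)
    {m : ℕ} (hm : 0 < m)
    (lam : Fin m → ℝ) (hlam : ∀ i, lam i ∈ Set.Icc (0:ℝ) 1) :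
    w1 (paramDistOne (fun i =>
        (1 - lam i) * invCDF ν (qlevel m i) + lam i * upInvCDF ν (qlevel m i))) ν
      ≤ (b - a) / (2 * m) :=
  quantile_projection_w1_error_general ν a b hsupp hm lam hlam
end

section
/- Optimality of the QTD quantile levels: for any m ∈ ℕ and any real numbers 0 < τ_1 ≤ τ_2 ≤ … ≤ τ_m < 1, one has max( τ_1, max_{i=1,…,m−1} (τ_{i+1} − τ_i)/2, 1 − τ_m ) ≥ 1/(2m), with equality when τ_i = (2i−1)/(2m) for all i. Hence the choice τ_i = (2i−1)/(2m) minimizes this quantity over all admissible quantile levels, with minimum value 1/(2m). -/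
/-! The `2m` quantities `τ_1`, `(τ_{i+1} − τ_i)/2` (each counted twice) and `1 − τ_m` telescope
to `1`, so they cannot all be below `1/(2m)`: if they were, induction would give
`τ_i < (2i − 1)/(2m)` and in particular `τ_m < 1 − 1/(2m)`. The levels `(2i − 1)/(2m)` make all of
them equal. -/

lemma lt_of_forall_increment_lt {m : ℕ} (τ : Fin m → ℝ) {ε : ℝ}
    (h0 : ∀ h : 0 < m, τ ⟨0, h⟩ < ε)
    (hstep : ∀ (i : ℕ) (h : i + 1 < m), τ ⟨i + 1, h⟩ - τ ⟨i, Nat.lt_of_succ_lt h⟩ < 2 * ε) :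
    ∀ (i : ℕ) (hi : i < m), τ ⟨i, hi⟩ < (2 * i + 1) * ε := by
  intro i
  induction i with
  | zero => intro hi; simpa using h0 hi
  | succ n ih =>
    intro hi
    have := ih (Nat.lt_of_succ_lt hi)
    have := hstep n hi
    push_cast
    linarith

theorem qtd_levels_optimal_general
    {m : ℕ} (hm : 0 < m) (τ : Fin m → ℝ) :
    (1 / (2 * (m:ℝ)) ≤ τ ⟨0, hm⟩
      ∨ (∃ i : ℕ, ∃ h : i + 1 < m,
          1 / (2 * (m:ℝ)) ≤ (τ ⟨i + 1, h⟩ - τ ⟨i, Nat.lt_of_succ_lt h⟩) / 2)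
      ∨ 1 / (2 * (m:ℝ)) ≤ 1 - τ ⟨m - 1, Nat.sub_lt hm Nat.one_pos⟩)
    ∧ ((∀ i : Fin m, τ i = (2 * (i:ℝ) + 1) / (2 * m)) →
        (τ ⟨0, hm⟩ = 1 / (2 * (m:ℝ))
        ∧ (∀ (i : ℕ) (h : i + 1 < m),
            (τ ⟨i + 1, h⟩ - τ ⟨i, Nat.lt_of_succ_lt h⟩) / 2 = 1 / (2 * (m:ℝ)))
        ∧ 1 - τ ⟨m - 1, Nat.sub_lt hm Nat.one_pos⟩ = 1 / (2 * (m:ℝ)))) := by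
  have hmR : (0:ℝ) < m := by exact_mod_cast hm
  have hlast : ((m - 1 : ℕ) : ℝ) = m - 1 := by rw [Nat.cast_sub hm, Nat.cast_one]
  constructor
  · by_contra! ⟨hfirst, hgaps, hend⟩
    have hbound := lt_of_forall_increment_lt τ (fun _ => hfirst)
      (fun i h => by linarith [hgaps i h]) (m - 1) (Nat.sub_lt hm Nat.one_pos)
    rw [hlast] at hbound
    have : (2 * ((m:ℝ) - 1) + 1) * (1 / (2 * m)) = 1 - 1 / (2 * m) := by field_simp; ring
    linarith
  · intro hτ
    refine ⟨?_, fun i h => ?_, ?_⟩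
    · rw [hτ]; push_cast; ring
    · rw [hτ, hτ]; push_cast; field_simp; ring
    · rw [hτ]; simp only [hlast]; field_simp; ring

/-- Optimality of the QTD quantile levels: for any monotone quantile levels
`0 < τ_1 ≤ … ≤ τ_m < 1`, the quantity `max(τ_1, max_i (τ_{i+1} − τ_i)/2, 1 − τ_m)` is at least
`1/(2m)` (expressed as: one of the three kinds of terms is ≥ 1/(2m)); and for the QTD choice
`τ_i = (2i−1)/(2m)` all of these terms are equal to `1/(2m)`, so the choice attains the minimum
value `1/(2m)`. -/
theorem qtd_levels_optimal
    {m : ℕ} (hm : 0 < m) (τ : Fin m → ℝ) (hmono : Monotone τ)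
    (h0 : 0 < τ ⟨0, hm⟩) (h1 : τ ⟨m - 1, Nat.sub_lt hm Nat.one_pos⟩ < 1) :
    (1 / (2 * (m:ℝ)) ≤ τ ⟨0, hm⟩
      ∨ (∃ i : ℕ, ∃ h : i + 1 < m,
          1 / (2 * (m:ℝ)) ≤ (τ ⟨i + 1, h⟩ - τ ⟨i, Nat.lt_of_succ_lt h⟩) / 2)
      ∨ 1 / (2 * (m:ℝ)) ≤ 1 - τ ⟨m - 1, Nat.sub_lt hm Nat.one_pos⟩)
    ∧ ((∀ i : Fin m, τ i = (2 * (i:ℝ) + 1) / (2 * m)) →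
        (τ ⟨0, hm⟩ = 1 / (2 * (m:ℝ))
        ∧ (∀ (i : ℕ) (h : i + 1 < m),
            (τ ⟨i + 1, h⟩ - τ ⟨i, Nat.lt_of_succ_lt h⟩) / 2 = 1 / (2 * (m:ℝ)))
        ∧ 1 - τ ⟨m - 1, Nat.sub_lt hm Nat.one_pos⟩ = 1 / (2 * (m:ℝ)))) :=
  qtd_levels_optimal_general hm τ
end
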